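/- arXiv:1905.09858 — 9 statements merged into one kernel-verified Lean document; each statement's English description precedes it below -/
import Mathlib

section
/- Let P be the disjoint sum of t chains, each with r points, and let k be the positive integer with (k-1)^r < t ≤ k^r. Then the distinguishing number of P equals k. -/
/-- A coloring `c` of a poset is distinguishing if the only color-preserving
order-automorphism is the identity. -/
def IsDistinguishing {α : Type*} [PartialOrder α] {C : Type*} (c : α → C) : Prop :=
  ∀ φ : α ≃o α, (∀ x, c (φ x) = c x) → ∀ x, φ x = x

/-- The distinguishing number of a poset: the least `k` admitting a distinguishing
coloring with `k` colors. -/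
noncomputable def distNum (α : Type*) [PartialOrder α] : ℕ :=
  sInf {k | ∃ c : α → Fin k, IsDistinguishing c}

section Aux

variable {t r : ℕ}

/-- Any permutation of the index set induces an order automorphism of the sum of chains. -/
def sigmaPermIso (σ : Fin t ≃ Fin t) : (Σ _ : Fin t, Fin r) ≃o (Σ _ : Fin t, Fin r) where
  toFun := fun p => ⟨σ p.1, p.2⟩
  invFun := fun p => ⟨σ.symm p.1, p.2⟩
  left_inv := fun p => by simp
  right_inv := fun p => by simp
  map_rel_iff' := by
    intro a b
    simp only [Equiv.coe_fn_mk, Sigma.le_def, eq_rec_constant]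
    constructor
    · rintro ⟨h, h2⟩; exact ⟨σ.injective h, h2⟩
    · rintro ⟨h, h2⟩; exact ⟨congrArg σ h, h2⟩

lemma fst_apply_eq (φ : (Σ _ : Fin t, Fin r) ≃o (Σ _ : Fin t, Fin r)) (a : Fin t)
    (x y : Fin r) : (φ ⟨a, x⟩).1 = (φ ⟨a, y⟩).1 := by
  rcases le_total x y with h | h
  · have : φ ⟨a, x⟩ ≤ φ ⟨a, y⟩ := φ.le_iff_le.2 (Sigma.le_def.2 ⟨rfl, h⟩)
    exact (Sigma.le_def.1 this).1
  · have : φ ⟨a, y⟩ ≤ φ ⟨a, x⟩ := φ.le_iff_le.2 (Sigma.le_def.2 ⟨rfl, h⟩)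
    exact ((Sigma.le_def.1 this).1).symm

lemma snd_apply_eq (φ : (Σ _ : Fin t, Fin r) ≃o (Σ _ : Fin t, Fin r)) (a : Fin t)
    (x : Fin r) : (φ ⟨a, x⟩).2 = x := by
  have hsm : StrictMono (fun x : Fin r => (φ ⟨a, x⟩).2) := by
    intro x y hxy
    have h : φ ⟨a, x⟩ < φ ⟨a, y⟩ := by
      refine φ.lt_iff_lt.2 ?_
      rw [Sigma.lt_def]
      exact ⟨rfl, hxy⟩
    obtain ⟨h1, h2⟩ := Sigma.lt_def.1 h
    simpa [eq_rec_constant] using h2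
  have hb : Function.Surjective (fun x : Fin r => (φ ⟨a, x⟩).2) :=
    (Finite.injective_iff_bijective.1 hsm.injective).surjective
  haveI : WellFoundedLT (Fin r) := Finite.to_wellFoundedLT
  have hid : StrictMono (id : Fin r → Fin r) := strictMono_id
  have := (StrictMono.range_inj (β := Fin r) (γ := Fin r) hsm hid).1
    (by rw [Set.range_id, Set.range_eq_univ.2 hb])
  exact congrFun this x

/-- Every order automorphism of the disjoint sum of chains acts by a permutation on the
index, fixing positions inside each chain. -/
lemma apply_eq (φ : (Σ _ : Fin t, Fin r) ≃o (Σ _ : Fin t, Fin r)) (a : Fin t) (x : Fin r) :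
    φ ⟨a, x⟩ = ⟨(φ ⟨a, x⟩).1, x⟩ := by
  have h := snd_apply_eq φ a x
  exact Sigma.ext rfl (heq_of_eq h)

end Aux

/-- If `P` is the disjoint sum of `t` chains, each with `r` points, and
`(k-1)^r < t ≤ k^r` with `k ≥ 1`, then `D(P) = k`. -/
theorem distNum_sum_of_chains (t r k : ℕ) (ht : 0 < t) (hr : 0 < r) (hk : 0 < k)
    (h1 : (k - 1) ^ r < t) (h2 : t ≤ k ^ r) :
    distNum (Σ _ : Fin t, Fin r) = k := by
  have hmem : k ∈ {m | ∃ c : (Σ _ : Fin t, Fin r) → Fin m, IsDistinguishing c} := by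
    -- build an injection from chains to color sequences
    have hcard : Fintype.card (Fin t) ≤ Fintype.card (Fin r → Fin k) := by
      simp [Fintype.card_fin, Fintype.card_fun]; exact h2
    obtain ⟨f⟩ := Function.Embedding.nonempty_of_card_le hcard
    refine ⟨fun p => f p.1 p.2, ?_⟩
    intro φ hc p
    obtain ⟨a, x⟩ := p
    have key : ∀ b : Fin t, ∀ y : Fin r, f (φ ⟨b, y⟩).1 y = f b y := by
      intro b y
      have := hc ⟨b, y⟩
      rw [apply_eq φ b y] at this
      exact this
    have hfa : f (φ ⟨a, x⟩).1 = f a := by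
      funext y
      have h := key a y
      rwa [fst_apply_eq φ a y x] at h
    have : (φ ⟨a, x⟩).1 = a := f.injective hfa
    rw [apply_eq φ a x, this]
  have hlow : ∀ m, m ∈ {m | ∃ c : (Σ _ : Fin t, Fin r) → Fin m, IsDistinguishing c} → k ≤ m := by
    intro m hm
    by_contra hlt
    push_neg at hlt
    obtain ⟨c, hc⟩ := hm
    -- two chains must get the same color sequence
    have hcard : Fintype.card (Fin r → Fin m) < Fintype.card (Fin t) := by
      simp only [Fintype.card_fun, Fintype.card_fin]
      calc m ^ r ≤ (k - 1) ^ r := Nat.pow_le_pow_left (by omega) r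
        _ < t := h1
    obtain ⟨i, j, hij, hcij⟩ :=
      Fintype.exists_ne_map_eq_of_card_lt (fun i : Fin t => fun y => c ⟨i, y⟩) hcard
    set φ := sigmaPermIso (t := t) (r := r) (Equiv.swap i j) with hφ
    have hpres : ∀ p : (Σ _ : Fin t, Fin r), c (φ p) = c p := by
      rintro ⟨b, y⟩
      show c ⟨Equiv.swap i j b, y⟩ = c ⟨b, y⟩
      rcases eq_or_ne b i with rfl | hbi
      · rw [Equiv.swap_apply_left]
        exact (congrFun hcij y).symm
      rcases eq_or_ne b j with rfl | hbj
      · rw [Equiv.swap_apply_right]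
        exact congrFun hcij y
      · rw [Equiv.swap_apply_of_ne_of_ne hbi hbj]
    have := hc φ hpres ⟨i, ⟨0, hr⟩⟩
    have : (⟨Equiv.swap i j i, ⟨0, hr⟩⟩ : Σ _ : Fin t, Fin r) = ⟨i, ⟨0, hr⟩⟩ := this
    rw [Equiv.swap_apply_left] at this
    exact hij (congrArg Sigma.fst this).symm
  refine le_antisymm (Nat.sInf_le hmem) ?_
  exact le_csInf ⟨k, hmem⟩ hlow
end

section
/- Let P be a finite poset that is a disjoint sum of chains, partitioned as P = P_1 + P_2 + ⋯ + P_m where P_i consists of t_i chains each with r_i points, and the values r_1, …, r_m are pairwise distinct. Then D(P) = max{ D(P_i) : 1 ≤ i ≤ m }. -/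
open Relation

theorem IsDistinguishing.comp_injective {α C D : Type*} [PartialOrder α] {c : α → C}
    (hc : IsDistinguishing c) {f : C → D} (hf : Function.Injective f) :
    IsDistinguishing (f ∘ c) :=
  fun φ hφ => hc φ fun x => hf (hφ x)

theorem distNum_le_of_isDistinguishing {α : Type*} [PartialOrder α] {k : ℕ} {c : α → Fin k}
    (hc : IsDistinguishing c) : distNum α ≤ k :=
  Nat.sInf_le ⟨c, hc⟩

theorem exists_isDistinguishing_distNum (α : Type*) [PartialOrder α] [Finite α] :
    ∃ c : α → Fin (distNum α), IsDistinguishing c :=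
  Nat.sInf_mem (s := {k | ∃ c : α → Fin k, IsDistinguishing c})
    ⟨Nat.card α, Finite.equivFin α, fun _ hφ x => (Finite.equivFin α).injective (hφ x)⟩

theorem OrderIso.ncard_symmGen_apply {α β : Type*} [Preorder α] [Preorder β] (φ : α ≃o β)
    (x : α) : {z | SymmGen (· ≤ ·) (φ x) z}.ncard = {z | SymmGen (· ≤ ·) x z}.ncard := by
  have hset : {z | SymmGen (· ≤ ·) (φ x) z} = φ '' {z | SymmGen (· ≤ ·) x z} := by
    ext z
    simp only [φ.image_eq_preimage_symm, Set.mem_ofPred_eq, Set.mem_preimage, SymmGen,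
      φ.le_symm_apply, φ.symm_apply_le]
  rw [hset, Set.ncard_image_of_injective _ φ.injective]

section Sigma

variable {ι : Type*} {β : ι → Type*}

theorem Sigma.ncard_symmGen_mk [∀ i, LE (β i)] (i : ι) (b : β i) :
    {z : Σ i, β i | SymmGen (· ≤ ·) ⟨i, b⟩ z}.ncard =
      {w | SymmGen (· ≤ ·) b w}.ncard := by
  have hset : {z : Σ i, β i | SymmGen (· ≤ ·) ⟨i, b⟩ z} =
      Sigma.mk i '' {w | SymmGen (· ≤ ·) b w} := by
    ext z
    constructor
    · rintro (⟨_, _, w, h⟩ | ⟨_, w, _, h⟩)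
      exacts [⟨w, Or.inl h, rfl⟩, ⟨w, Or.inr h, rfl⟩]
    · rintro ⟨w, hw, rfl⟩
      simpa only [Set.mem_ofPred_eq, SymmGen, Sigma.mk_le_mk_iff] using hw
  rw [hset, Set.ncard_image_of_injective _ sigma_mk_injective]

theorem Sigma.mk_sigmaSubtype (i : ι) (x : {s : Σ i, β i // s.1 = i}) :
    (⟨i, Equiv.sigmaSubtype i x⟩ : Σ i, β i) = x.1 := by
  obtain ⟨⟨j, b⟩, rfl⟩ := x
  rfl

namespace OrderIso

variable [∀ i, Preorder (β i)]

def sigmaCongrRight (e : ∀ i, β i ≃o β i) : (Σ i, β i) ≃o (Σ i, β i) where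
  toEquiv := Equiv.sigmaCongrRight fun i => (e i).toEquiv
  map_rel_iff' := by
    rintro ⟨i, a⟩ ⟨j, b⟩
    constructor
    · rintro ⟨_, _, _, h⟩
      exact Sigma.LE.fiber _ _ _ ((e i).map_rel_iff.1 h)
    · rintro ⟨_, _, _, h⟩
      exact Sigma.LE.fiber _ _ _ ((e i).map_rel_iff.2 h)

@[simp]
theorem sigmaCongrRight_mk (e : ∀ i, β i ≃o β i) (i : ι) (b : β i) :
    sigmaCongrRight e ⟨i, b⟩ = ⟨i, e i b⟩ :=
  rfl

def sigmaFiber (φ : (Σ i, β i) ≃o (Σ i, β i)) (hφ : ∀ x, (φ x).1 = x.1) (i : ι) :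
    β i ≃o β i where
  toEquiv := (Equiv.sigmaSubtype i).symm.trans <|
    (φ.toEquiv.subtypeEquiv fun x => by simp [hφ]).trans (Equiv.sigmaSubtype i)
  map_rel_iff' {a b} := by
    change Equiv.sigmaSubtype i ⟨φ ⟨i, a⟩, hφ _⟩ ≤ Equiv.sigmaSubtype i ⟨φ ⟨i, b⟩, hφ _⟩ ↔
      a ≤ b
    rw [← Sigma.mk_le_mk_iff (α := β), Sigma.mk_sigmaSubtype, Sigma.mk_sigmaSubtype]
    exact φ.le_iff_le.trans Sigma.mk_le_mk_iff

theorem mk_sigmaFiber (φ : (Σ i, β i) ≃o (Σ i, β i)) (hφ : ∀ x, (φ x).1 = x.1) (i : ι)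
    (b : β i) : (⟨i, φ.sigmaFiber hφ i b⟩ : Σ i, β i) = φ ⟨i, b⟩ :=
  Sigma.mk_sigmaSubtype (β := β) i ⟨φ ⟨i, b⟩, hφ _⟩

end OrderIso

variable [∀ i, PartialOrder (β i)] {C : Type*}

theorem IsDistinguishing.comp_sigma_mk {c : (Σ i, β i) → C} (hc : IsDistinguishing c)
    (i : ι) : IsDistinguishing (c ∘ Sigma.mk i) := by
  classical
  intro ψ hψ b
  let e : ∀ j, β j ≃o β j := Function.update (fun j => OrderIso.refl (β j)) i ψ
  have he : ∀ x, c (OrderIso.sigmaCongrRight e x) = c x := by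
    rintro ⟨j, w⟩
    rcases eq_or_ne j i with rfl | hji
    · simpa [e] using hψ w
    · simp [e, Function.update_of_ne hji]
  simpa [e] using hc _ he ⟨i, b⟩

theorem IsDistinguishing.sigma (hfst : ∀ φ : (Σ i, β i) ≃o (Σ i, β i), ∀ x, (φ x).1 = x.1)
    {c : ∀ i, β i → C} (hc : ∀ i, IsDistinguishing (c i)) :
    IsDistinguishing fun x : Σ i, β i => c x.1 x.2 := by
  rintro φ hφ ⟨i, b⟩
  have hψ : ∀ w, c i (φ.sigmaFiber (hfst φ) i w) = c i w := fun w => by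
    have h := hφ ⟨i, w⟩
    rwa [← φ.mk_sigmaFiber (hfst φ)] at h
  rw [← φ.mk_sigmaFiber (hfst φ), hc i _ hψ b]

theorem distNum_sigma [Fintype ι] [∀ i, Finite (β i)]
    (hfst : ∀ φ : (Σ i, β i) ≃o (Σ i, β i), ∀ x, (φ x).1 = x.1) :
    distNum (Σ i, β i) = Finset.univ.sup fun i => distNum (β i) := by
  apply le_antisymm
  · choose c hc using fun i => exists_isDistinguishing_distNum (β i)
    have hle i : distNum (β i) ≤ Finset.univ.sup fun i => distNum (β i) :=
      Finset.le_sup (f := fun i => distNum (β i)) (Finset.mem_univ i)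
    exact distNum_le_of_isDistinguishing
      (IsDistinguishing.sigma hfst fun i => (hc i).comp_injective (Fin.castLE_injective (hle i)))
  · refine Finset.sup_le fun i _ => ?_
    obtain ⟨c, hc⟩ := exists_isDistinguishing_distNum (Σ i, β i)
    exact distNum_le_of_isDistinguishing (hc.comp_sigma_mk i)

end Sigma

section Chains

variable {ι : Type*} {κ γ : ι → Type*} [∀ i, LinearOrder (γ i)]

theorem ncard_symmGen_sigma_chains (x : Σ i, Σ _ : κ i, γ i) :
    {z | SymmGen (· ≤ ·) x z}.ncard = Nat.card (γ x.1) := by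
  obtain ⟨i, j, a⟩ := x
  rw [Sigma.ncard_symmGen_mk, Sigma.ncard_symmGen_mk]
  simp only [symmGen_of_total, Set.ofPred_true, Set.ncard_univ]

theorem OrderIso.fst_apply_sigma_chains (hγ : Function.Injective fun i => Nat.card (γ i))
    (φ : (Σ i, Σ _ : κ i, γ i) ≃o (Σ i, Σ _ : κ i, γ i)) (x : Σ i, Σ _ : κ i, γ i) :
    (φ x).1 = x.1 :=
  hγ <| by simp only [← ncard_symmGen_sigma_chains, φ.ncard_symmGen_apply]

end Chains

theorem distNum_sum_of_chain_groups_general (m : ℕ) (t r : Fin m → ℕ)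
    (hinj : Function.Injective r) :
    distNum (Σ i : Fin m, Σ _ : Fin (t i), Fin (r i)) =
      Finset.univ.sup fun i : Fin m => distNum (Σ _ : Fin (t i), Fin (r i)) :=
  distNum_sigma <| OrderIso.fst_apply_sigma_chains <| by simpa only [Nat.card_fin] using hinj

/-- If `P` is a disjoint sum of chains, grouped as `P = P₁ + ⋯ + P_m` where
`P i` consists of `t i` chains each with `r i` points and the `r i` are pairwise distinct,
then `D(P) = max_i D(P_i)`. -/
theorem distNum_sum_of_chain_groups (m : ℕ) (hm : 0 < m) (t r : Fin m → ℕ)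
    (ht : ∀ i, 0 < t i) (hr : ∀ i, 0 < r i) (hinj : Function.Injective r) :
    distNum (Σ i : Fin m, Σ _ : Fin (t i), Fin (r i)) =
      Finset.univ.sup fun i : Fin m => distNum (Σ _ : Fin (t i), Fin (r i)) :=
  distNum_sum_of_chain_groups_general m t r hinj
end

section
/- Let n > 1 be an integer with prime factorization n = p_1^{a_1} p_2^{a_2} ⋯ p_k^{a_k} (p_i distinct primes, a_i ≥ 1). The divisibility lattice L_n of divisors of n ordered by divisibility satisfies D(L_n) = 1 if the exponents a_1, …, a_k are pairwise distinct, and D(L_n) = 2 otherwise. -/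
/-- The divisibility lattice of `n`: divisors of `n` ordered by divisibility. -/
def DivLattice (n : ℕ) : Type := {d : ℕ // d ∣ n}

instance (n : ℕ) : PartialOrder (DivLattice n) where
  le a b := a.val ∣ b.val
  le_refl a := dvd_refl _
  le_trans a b c := dvd_trans
  le_antisymm a b h h' := Subtype.ext (Nat.dvd_antisymm h h')

/-!
An order automorphism `φ` of `L_n` preserves the number of elements below each point (the number
of divisors) and the prime powers (the elements with a greatest strict lower bound). Hence
`φ (p ^ b) = σ(p) ^ b` for a permutation `σ` of the prime factors of `n` preserving exponents,
and `φ` is determined by `σ` because divisibility is tested on prime powers. Distinct exponents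
force `σ = id`. Otherwise swapping two primes with equal exponents is a nontrivial automorphism,
while colouring the chain `p₁ ∣ p₁p₂ ∣ ⋯ ∣ p₁⋯p_k` (primes increasing) is distinguishing: an
automorphism of a finite poset moves no element to a comparable one, so the chain is fixed
pointwise, and since a prime `r ∣ n` divides `p₁⋯p_i` iff `r ≤ p_i`, `σ` preserves the order of
the primes.
-/

theorem OrderIso.ncard_Iic_apply {α β : Type*} [Preorder α] [Preorder β] (φ : α ≃o β)
    (x : α) : (Set.Iic (φ x)).ncard = (Set.Iic x).ncard := by
  rw [← φ.image_Iic, Set.ncard_image_of_injective _ φ.injective]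

section DistinguishingNumber

variable {α : Type*} [PartialOrder α]

theorem OrderIso.apply_eq_self_of_le [Finite α] (φ : α ≃o α) {x : α} (h : x ≤ φ x) :
    φ x = x := by
  have hIic := Set.eq_of_subset_of_ncard_le (Set.Iic_subset_Iic.2 h) (φ.ncard_Iic_apply x).le
  exact le_antisymm (Set.mem_Iic.1 (hIic ▸ Set.self_mem_Iic)) h

theorem OrderIso.apply_eq_self_of_apply_le [Finite α] (φ : α ≃o α) {x : α} (h : φ x ≤ x) :
    φ x = x := by
  have hIic := Set.eq_of_subset_of_ncard_le (Set.Iic_subset_Iic.2 h) (φ.ncard_Iic_apply x).ge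
  exact le_antisymm h (Set.mem_Iic.1 (hIic ▸ Set.self_mem_Iic))

theorem distNum_le {k : ℕ} {c : α → Fin k} (hc : IsDistinguishing c) : distNum α ≤ k :=
  Nat.sInf_le ⟨c, hc⟩

theorem distNum_eq_one [Nonempty α] (h : ∀ φ : α ≃o α, ∀ x, φ x = x) :
    distNum α = 1 := by
  refine le_antisymm (distNum_le (c := fun _ => (0 : Fin 1)) fun φ _ => h φ) ?_
  refine le_csInf ⟨1, fun _ => 0, fun φ _ => h φ⟩ ?_
  rintro k ⟨c, -⟩
  exact Fin.pos (c (Classical.arbitrary α))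

theorem distNum_eq_two [Nonempty α] {φ : α ≃o α} {x : α} (hφx : φ x ≠ x)
    {c : α → Fin 2} (hc : IsDistinguishing c) : distNum α = 2 := by
  refine le_antisymm (distNum_le hc) (le_csInf ⟨2, c, hc⟩ ?_)
  rintro k ⟨c', hc'⟩
  have hk := Fin.pos (c' (Classical.arbitrary α))
  by_contra! hk1
  obtain rfl : k = 1 := by omega
  exact hφx (hc' φ (fun _ => Subsingleton.elim _ _) x)

end DistinguishingNumber

namespace Nat

def swapPrimes (p q d : ℕ) : ℕ :=
  ordCompl[p] (ordCompl[q] d) * p ^ d.factorization q * q ^ d.factorization p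

variable {p q : ℕ}

theorem swapPrimes_ne_zero (hp : p ≠ 0) (hq : q ≠ 0) {d : ℕ} (hd : d ≠ 0) :
    swapPrimes p q d ≠ 0 :=
  mul_ne_zero (mul_ne_zero (ordCompl_pos p (ordCompl_pos q hd).ne').ne' (pow_ne_zero _ hp))
    (pow_ne_zero _ hq)

theorem factorization_swapPrimes (hp : p.Prime) (hq : q.Prime) (hpq : p ≠ q) {d : ℕ}
    (hd : d ≠ 0) (r : ℕ) :
    (swapPrimes p q d).factorization r = d.factorization (Equiv.swap p q r) := by
  have h₁ : ordCompl[p] (ordCompl[q] d) ≠ 0 := (ordCompl_pos p (ordCompl_pos q hd).ne').ne'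
  have h₂ : p ^ d.factorization q ≠ 0 := pow_ne_zero _ hp.ne_zero
  rw [swapPrimes, factorization_mul (mul_ne_zero h₁ h₂) (pow_ne_zero _ hq.ne_zero),
    factorization_mul h₁ h₂, factorization_ordCompl, factorization_ordCompl,
    hp.factorization_pow, hq.factorization_pow]
  simp only [Finsupp.add_apply, Finsupp.erase_apply, Finsupp.single_apply]
  rcases eq_or_ne r p with rfl | hrp
  · simp [hpq.symm]
  rcases eq_or_ne r q with rfl | hrq
  · simp [hrp, hpq]
  simp [Equiv.swap_apply_of_ne_of_ne hrp hrq, hrp, hrq, hrp.symm, hrq.symm]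

theorem swapPrimes_dvd_swapPrimes_iff (hp : p.Prime) (hq : q.Prime) (hpq : p ≠ q) {d e : ℕ}
    (hd : d ≠ 0) (he : e ≠ 0) : swapPrimes p q d ∣ swapPrimes p q e ↔ d ∣ e := by
  rw [← factorization_le_iff_dvd (swapPrimes_ne_zero hp.ne_zero hq.ne_zero hd)
    (swapPrimes_ne_zero hp.ne_zero hq.ne_zero he), ← factorization_le_iff_dvd hd he,
    Finsupp.le_def, Finsupp.le_def]
  simp only [factorization_swapPrimes hp hq hpq hd, factorization_swapPrimes hp hq hpq he]
  exact ((Equiv.swap p q).surjective.forall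
    (p := fun i => d.factorization i ≤ e.factorization i)).symm

theorem swapPrimes_swapPrimes (hp : p.Prime) (hq : q.Prime) (hpq : p ≠ q) {d : ℕ}
    (hd : d ≠ 0) : swapPrimes p q (swapPrimes p q d) = d := by
  have hne := swapPrimes_ne_zero hp.ne_zero hq.ne_zero hd
  refine eq_of_factorization_eq (swapPrimes_ne_zero hp.ne_zero hq.ne_zero hne) hd fun r => ?_
  rw [factorization_swapPrimes hp hq hpq hne, factorization_swapPrimes hp hq hpq hd,
    Equiv.swap_apply_self]

theorem swapPrimes_self_left (hp : p.Prime) (hq : q.Prime) (hpq : p ≠ q) :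
    swapPrimes p q p = q := by
  refine eq_of_factorization_eq (swapPrimes_ne_zero hp.ne_zero hq.ne_zero hp.ne_zero)
    hq.ne_zero fun r => ?_
  rw [factorization_swapPrimes hp hq hpq hp.ne_zero, hp.factorization, hq.factorization]
  simp only [Finsupp.single_apply, eq_comm (a := p), Equiv.swap_apply_eq_iff,
    Equiv.swap_apply_left, eq_comm (a := q)]

theorem swapPrimes_eq_self (hp : p.Prime) (hq : q.Prime) (hpq : p ≠ q) {n : ℕ} (hn : n ≠ 0)
    (hpqn : n.factorization p = n.factorization q) : swapPrimes p q n = n := by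
  refine eq_of_factorization_eq (swapPrimes_ne_zero hp.ne_zero hq.ne_zero hn) hn fun r => ?_
  rw [factorization_swapPrimes hp hq hpq hn]
  rcases eq_or_ne r p with rfl | hrp
  · rw [Equiv.swap_apply_left, hpqn]
  rcases eq_or_ne r q with rfl | hrq
  · rw [Equiv.swap_apply_right, hpqn]
  rw [Equiv.swap_apply_of_ne_of_ne hrp hrq]

theorem swapPrimes_dvd (hp : p.Prime) (hq : q.Prime) (hpq : p ≠ q) {n d : ℕ} (hn : n ≠ 0)
    (hpqn : n.factorization p = n.factorization q) (hd : d ∣ n) : swapPrimes p q d ∣ n :=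
  swapPrimes_eq_self hp hq hpq hn hpqn ▸
    (swapPrimes_dvd_swapPrimes_iff hp hq hpq (ne_zero_of_dvd_ne_zero hn hd) hn).2 hd

end Nat

namespace DivLattice

variable {n : ℕ}

theorem ext {x y : DivLattice n} (h : x.val = y.val) : x = y := Subtype.ext h

theorem le_iff_dvd {x y : DivLattice n} : x ≤ y ↔ x.val ∣ y.val := Iff.rfl

theorem val_ne_zero (hn : n ≠ 0) (x : DivLattice n) : x.val ≠ 0 :=
  ne_zero_of_dvd_ne_zero hn x.prop

theorem finite (hn : n ≠ 0) : Finite (DivLattice n) :=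
  Finite.of_injective (fun x : DivLattice n => (⟨x.val, Nat.lt_succ_of_le (Nat.le_of_dvd
    (Nat.pos_of_ne_zero hn) x.prop)⟩ : Fin (n + 1))) fun _ _ h => Subtype.ext (Fin.mk.inj h)

theorem ncard_Iic (hn : n ≠ 0) (x : DivLattice n) :
    (Set.Iic x).ncard = x.val.divisors.card := by
  have himage : (fun y : DivLattice n => y.val) '' Set.Iic x = (x.val.divisors : Set ℕ) := by
    ext d
    simp only [Set.mem_image, Finset.mem_coe, Nat.mem_divisors]
    refine ⟨?_, fun hd => ⟨⟨d, hd.1.trans x.prop⟩, hd.1, rfl⟩⟩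
    rintro ⟨y, hy, rfl⟩
    exact ⟨hy, val_ne_zero hn x⟩
  calc (Set.Iic x).ncard = ((fun y : DivLattice n => y.val) '' Set.Iic x).ncard :=
        (Set.ncard_image_of_injective _ fun _ _ => Subtype.ext).symm
    _ = x.val.divisors.card := by rw [himage, Set.ncard_coe_finset]

theorem card_divisors_apply (hn : n ≠ 0) (φ : DivLattice n ≃o DivLattice n)
    (x : DivLattice n) : (φ x).val.divisors.card = x.val.divisors.card := by
  rw [← ncard_Iic hn, ← ncard_Iic hn, φ.ncard_Iic_apply]

theorem isPrimePow_iff_exists_isGreatest_Iio (x : DivLattice n) :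
    IsPrimePow x.val ↔ ∃ m, IsGreatest (Set.Iio x) m := by
  rw [isPrimePow_nat_iff]
  constructor
  · rintro ⟨p, k, hp, hk, hx⟩
    have hdvd : p ^ (k - 1) ∣ x.val := hx ▸ pow_dvd_pow p (Nat.sub_le k 1)
    refine ⟨⟨p ^ (k - 1), hdvd.trans x.prop⟩,
      ⟨Set.mem_Iio.2 (lt_of_le_of_ne hdvd fun h => ?_), fun y hy => ?_⟩⟩
    · have := Nat.pow_right_injective hp.two_le ((congrArg Subtype.val h).trans hx.symm)
      omega
    · have hyx : y < x := hy
      obtain ⟨j, hj, hyj⟩ := (Nat.dvd_prime_pow hp).1 (hx ▸ le_iff_dvd.1 hyx.le)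
      have hjk : j ≠ k := fun h => hyx.ne (ext (by rw [hyj, h, hx]))
      exact le_iff_dvd.2 (hyj ▸ pow_dvd_pow p (by omega))
  · rintro ⟨m, hm, hmax⟩
    by_contra hx
    push Not at hx
    -- `x` is the lcm of its prime-power divisors, all strictly below `x` and hence below `m`.
    have hxm : x.val ∣ m.val := by
      refine (Nat.dvd_iff_prime_pow_dvd_dvd m.val x.val).2 fun p k hp hpk => ?_
      rcases Nat.eq_zero_or_pos k with rfl | hk
      · exact pow_zero p ▸ one_dvd _
      refine le_iff_dvd.1 (hmax (a := ⟨p ^ k, hpk.trans x.prop⟩) (Set.mem_Iio.2 ?_))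
      exact lt_of_le_of_ne (le_iff_dvd.2 hpk) fun h => hx p k hp hk (congrArg Subtype.val h)
    exact not_le_of_gt (Set.mem_Iio.1 hm) (le_iff_dvd.2 hxm)

theorem isPrimePow_apply (φ : DivLattice n ≃o DivLattice n) {x : DivLattice n}
    (hx : IsPrimePow x.val) : IsPrimePow (φ x).val := by
  rw [isPrimePow_iff_exists_isGreatest_Iio] at hx ⊢
  obtain ⟨m, hm⟩ := hx
  exact ⟨φ m, φ.image_Iio x ▸ φ.monotone.map_isGreatest hm⟩

theorem exists_prime_apply_eq_pow (hn : n ≠ 0) (φ : DivLattice n ≃o DivLattice n)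
    {x : DivLattice n} {p b : ℕ} (hp : p.Prime) (hb : 0 < b) (hx : x.val = p ^ b) :
    ∃ r, r.Prime ∧ (φ x).val = r ^ b := by
  have hφx := isPrimePow_apply φ (hx ▸ hp.isPrimePow.pow hb.ne')
  obtain ⟨r, c, hr, -, hrc⟩ := (isPrimePow_nat_iff _).1 hφx
  have hcard := card_divisors_apply hn φ x
  rw [← hrc, hx] at hcard
  simp only [Nat.divisors_prime_pow hr, Nat.divisors_prime_pow hp, Finset.card_map,
    Finset.card_range, add_left_inj] at hcard
  exact ⟨r, hr, hcard ▸ hrc.symm⟩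

theorem prime_apply (hn : n ≠ 0) (φ : DivLattice n ≃o DivLattice n) {x : DivLattice n}
    (hx : x.val.Prime) : (φ x).val.Prime := by
  obtain ⟨r, hr, hφx⟩ := exists_prime_apply_eq_pow hn φ hx one_pos (pow_one _).symm
  exact (pow_one r ▸ hφx) ▸ hr

theorem apply_val_eq_pow (hn : n ≠ 0) (φ : DivLattice n ≃o DivLattice n) {x y : DivLattice n}
    {b : ℕ} (hy : y.val.Prime) (hb : 0 < b) (hx : x.val = y.val ^ b) :
    (φ x).val = (φ y).val ^ b := by
  obtain ⟨r, hr, hφx⟩ := exists_prime_apply_eq_pow hn φ hy hb hx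
  have hyx : y ≤ x := le_iff_dvd.2 (hx ▸ dvd_pow_self _ hb.ne')
  have hdvd : (φ y).val ∣ r ^ b := hφx ▸ le_iff_dvd.1 (φ.monotone hyx)
  rw [hφx, (Nat.prime_dvd_prime_iff_eq (prime_apply hn φ hy) hr).1
    ((prime_apply hn φ hy).dvd_of_dvd_pow hdvd)]

theorem factorization_le_apply (hn : n ≠ 0) (φ : DivLattice n ≃o DivLattice n)
    {x : DivLattice n} (hx : x.val.Prime) :
    n.factorization x.val ≤ n.factorization (φ x).val := by
  have hpow : (φ ⟨_, Nat.ordProj_dvd n x.val⟩).val = (φ x).val ^ n.factorization x.val :=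
    apply_val_eq_pow hn φ hx (hx.factorization_pos_of_dvd hn x.prop) rfl
  exact ((prime_apply hn φ hx).pow_dvd_iff_le_factorization hn).1 (hpow ▸ (φ _).prop)

theorem factorization_apply (hn : n ≠ 0) (φ : DivLattice n ≃o DivLattice n)
    {x : DivLattice n} (hx : x.val.Prime) :
    n.factorization (φ x).val = n.factorization x.val := by
  refine le_antisymm ?_ (factorization_le_apply hn φ hx)
  simpa using factorization_le_apply hn φ.symm (prime_apply hn φ hx)

theorem eq_self_of_forall_isPrimePow (φ : DivLattice n ≃o DivLattice n)
    (h : ∀ y : DivLattice n, IsPrimePow y.val → φ y = y) (x : DivLattice n) : φ x = x := by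
  have hle : ∀ y z : DivLattice n,
      (∀ w : DivLattice n, IsPrimePow w.val → w ≤ y → w ≤ z) → y ≤ z :=
    fun y z hyz => le_iff_dvd.2 <|
    (Nat.dvd_iff_prime_pow_dvd_dvd z.val y.val).2 fun p k hp hpk => by
      rcases Nat.eq_zero_or_pos k with rfl | hk
      · exact pow_zero p ▸ one_dvd _
      exact le_iff_dvd.1 (hyz ⟨p ^ k, hpk.trans y.prop⟩ (hp.isPrimePow.pow hk.ne') hpk)
  have hiff : ∀ w : DivLattice n, IsPrimePow w.val → (w ≤ φ x ↔ w ≤ x) := fun w hw => by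
    conv_lhs => rw [← h w hw]
    exact φ.le_iff_le
  exact le_antisymm (hle _ _ fun w hw => (hiff w hw).1) (hle _ _ fun w hw => (hiff w hw).2)

theorem eq_self_of_forall_prime (hn : n ≠ 0) (φ : DivLattice n ≃o DivLattice n)
    (h : ∀ x : DivLattice n, x.val.Prime → φ x = x) : ∀ x, φ x = x := by
  refine eq_self_of_forall_isPrimePow φ fun y hy => ?_
  obtain ⟨p, k, hp, hk, hpk⟩ := (isPrimePow_nat_iff _).1 hy
  have hpn : p ∣ n := (dvd_pow_self p hk.ne').trans (hpk ▸ y.prop)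
  refine ext ((apply_val_eq_pow hn φ (y := ⟨p, hpn⟩) hp hk hpk.symm).trans ?_)
  rw [h ⟨p, hpn⟩ hp]
  exact hpk

theorem eq_self_of_injOn_factorization (hn : n ≠ 0)
    (H : Set.InjOn n.factorization n.primeFactors) (φ : DivLattice n ≃o DivLattice n)
    (x : DivLattice n) : φ x = x :=
  eq_self_of_forall_prime hn φ (fun y hy => ext <|
    H (Nat.mem_primeFactors.2 ⟨prime_apply hn φ hy, (φ y).prop, hn⟩)
      (Nat.mem_primeFactors.2 ⟨hy, y.prop, hn⟩) (factorization_apply hn φ hy)) x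

def swapIso (hn : n ≠ 0) {p q : ℕ} (hp : p.Prime) (hq : q.Prime) (hpq : p ≠ q)
    (hpqn : n.factorization p = n.factorization q) : DivLattice n ≃o DivLattice n where
  toFun x := ⟨Nat.swapPrimes p q x.val, Nat.swapPrimes_dvd hp hq hpq hn hpqn x.prop⟩
  invFun x := ⟨Nat.swapPrimes p q x.val, Nat.swapPrimes_dvd hp hq hpq hn hpqn x.prop⟩
  left_inv x := ext (Nat.swapPrimes_swapPrimes hp hq hpq (val_ne_zero hn x))
  right_inv x := ext (Nat.swapPrimes_swapPrimes hp hq hpq (val_ne_zero hn x))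
  map_rel_iff' :=
    Nat.swapPrimes_dvd_swapPrimes_iff hp hq hpq (val_ne_zero hn _) (val_ne_zero hn _)

theorem swapIso_apply_ne (hn : n ≠ 0) {p q : ℕ} (hp : p.Prime) (hq : q.Prime) (hpq : p ≠ q)
    (hpqn : n.factorization p = n.factorization q) (hpn : p ∣ n) :
    swapIso hn hp hq hpq hpqn ⟨p, hpn⟩ ≠ ⟨p, hpn⟩ := fun h =>
  hpq ((congrArg Subtype.val h).symm.trans (Nat.swapPrimes_self_left hp hq hpq))

def prodPrimeFactorsLE (n p : ℕ) : ℕ := ∏ q ∈ n.primeFactors with q ≤ p, q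

theorem prodPrimeFactorsLE_dvd (n p : ℕ) : prodPrimeFactorsLE n p ∣ n :=
  (Finset.prod_dvd_prod_of_subset _ _ id (Finset.filter_subset _ _)).trans
    (Nat.prod_primeFactors_dvd n)

theorem prodPrimeFactorsLE_dvd_prodPrimeFactorsLE {p p' : ℕ} (h : p ≤ p') :
    prodPrimeFactorsLE n p ∣ prodPrimeFactorsLE n p' :=
  Finset.prod_dvd_prod_of_subset _ _ id fun _ hq =>
    Finset.mem_filter.2 ⟨(Finset.mem_filter.1 hq).1, (Finset.mem_filter.1 hq).2.trans h⟩

theorem dvd_prodPrimeFactorsLE_iff {p r : ℕ} (hr : r ∈ n.primeFactors) :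
    r ∣ prodPrimeFactorsLE n p ↔ r ≤ p := by
  have hrp := Nat.prime_of_mem_primeFactors hr
  refine ⟨fun h => ?_, fun h => Finset.dvd_prod_of_mem id (Finset.mem_filter.2 ⟨hr, h⟩)⟩
  obtain ⟨q, hq, hrq⟩ := (Prime.dvd_finsetProd_iff hrp.prime id).1 h
  obtain ⟨hqn, hqp⟩ := Finset.mem_filter.1 hq
  exact (Nat.prime_dvd_prime_iff_eq hrp (Nat.prime_of_mem_primeFactors hqn)).1 hrq ▸ hqp

open Classical in
noncomputable def chainColoring (n : ℕ) : DivLattice n → Fin 2 :=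
  fun x => if ∃ p, x.val = prodPrimeFactorsLE n p then 1 else 0

theorem chainColoring_eq_one_iff (x : DivLattice n) :
    chainColoring n x = 1 ↔ ∃ p, x.val = prodPrimeFactorsLE n p := by
  unfold chainColoring
  split_ifs with h
  · exact iff_of_true rfl h
  · exact iff_of_false (by decide) h

theorem apply_prodPrimeFactorsLE_eq (hn : n ≠ 0) {φ : DivLattice n ≃o DivLattice n}
    (hφ : ∀ x, chainColoring n (φ x) = chainColoring n x) (p : ℕ) :
    φ ⟨_, prodPrimeFactorsLE_dvd n p⟩ = ⟨_, prodPrimeFactorsLE_dvd n p⟩ := by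
  have := finite hn
  set x : DivLattice n := ⟨_, prodPrimeFactorsLE_dvd n p⟩
  obtain ⟨p', hp'⟩ := (chainColoring_eq_one_iff (φ x)).1
    ((hφ x).trans ((chainColoring_eq_one_iff x).2 ⟨p, rfl⟩))
  rcases le_total p p' with h | h
  · exact φ.apply_eq_self_of_le
      (le_iff_dvd.2 (hp' ▸ prodPrimeFactorsLE_dvd_prodPrimeFactorsLE h))
  · exact φ.apply_eq_self_of_apply_le
      (le_iff_dvd.2 (hp' ▸ prodPrimeFactorsLE_dvd_prodPrimeFactorsLE h))

theorem isDistinguishing_chainColoring (hn : n ≠ 0) : IsDistinguishing (chainColoring n) := by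
  intro φ hφ
  refine eq_self_of_forall_prime hn φ fun x hx => ext ?_
  have hxn : x.val ∈ n.primeFactors := Nat.mem_primeFactors.2 ⟨hx, x.prop, hn⟩
  have hφxn : (φ x).val ∈ n.primeFactors :=
    Nat.mem_primeFactors.2 ⟨prime_apply hn φ hx, (φ x).prop, hn⟩
  have hle : ∀ p, (φ x).val ≤ p ↔ x.val ≤ p := fun p => by
    rw [← dvd_prodPrimeFactorsLE_iff hφxn, ← dvd_prodPrimeFactorsLE_iff hxn]
    have := φ.le_iff_le (x := x) (y := ⟨_, prodPrimeFactorsLE_dvd n p⟩)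
    rwa [apply_prodPrimeFactorsLE_eq hn hφ p] at this
  exact le_antisymm ((hle _).2 le_rfl) ((hle _).1 le_rfl)

end DivLattice

/-- For `n > 1`, the divisibility lattice `L_n` has `D(L_n) = 1` if the
exponents in the prime factorization of `n` are pairwise distinct, and `D(L_n) = 2`
otherwise. -/
theorem distNum_divLattice (n : ℕ) (hn : 1 < n) :
    ((∀ p q : ℕ, p.Prime → q.Prime → p ∣ n → q ∣ n →
        n.factorization p = n.factorization q → p = q) → distNum (DivLattice n) = 1) ∧
    ((¬ ∀ p q : ℕ, p.Prime → q.Prime → p ∣ n → q ∣ n →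
        n.factorization p = n.factorization q → p = q) → distNum (DivLattice n) = 2) := by
  have hn0 : n ≠ 0 := by omega
  have : Nonempty (DivLattice n) := ⟨⟨1, one_dvd n⟩⟩
  refine ⟨fun H => distNum_eq_one (DivLattice.eq_self_of_injOn_factorization hn0 ?_),
    fun H => ?_⟩
  · exact fun p hp q hq hpq => H p q (Nat.prime_of_mem_primeFactors hp)
      (Nat.prime_of_mem_primeFactors hq) (Nat.dvd_of_mem_primeFactors hp)
      (Nat.dvd_of_mem_primeFactors hq) hpq
  push Not at H
  obtain ⟨p, q, hp, hq, hpn, -, hpqn, hpq⟩ := H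
  exact distNum_eq_two (DivLattice.swapIso_apply_ne hn0 hp hq hpq hpqn hpn)
    (DivLattice.isDistinguishing_chainColoring hn0)
end

section
/- Let P be the disjoint sum of t chains, each with r points, and let k be the positive integer satisfying (k-1)(k-2)⋯(k-r) < t ≤ k(k-1)⋯(k-r+1) (falling factorials). Then the distinguishing chromatic number χ_D(P) equals k. -/
/-- The distinguishing chromatic number of a poset: the least number of colors in a
coloring that is proper (comparable points get distinct colors) and distinguishing. -/
noncomputable def chiD (α : Type*) [PartialOrder α] : ℕ :=
  sInf {k | ∃ c : α → Fin k, (∀ x y : α, x < y → c x ≠ c y) ∧ IsDistinguishing c}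

lemma strictMono_fin_eq_id {n : ℕ} (f : Fin n → Fin n) (hf : StrictMono f) : f = id := by
  have hs : Function.Surjective f := Finite.surjective_of_injective hf.injective
  have h : hf.orderIsoOfSurjective f hs = OrderIso.refl (Fin n) := Subsingleton.elim _ _
  funext a
  have := congrArg (fun e => (e : Fin n ≃o Fin n) a) h
  simpa using this

/-- Structure of automorphisms of a disjoint sum of equal chains: the second
component is preserved, and the first component of the image doesn't depend on
the second component of the input. -/
lemma auto_structure {t r : ℕ} (φ : (Σ _ : Fin t, Fin r) ≃o (Σ _ : Fin t, Fin r))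
    (i : Fin t) :
    (∀ a b : Fin r, (φ ⟨i, a⟩).1 = (φ ⟨i, b⟩).1) ∧ (∀ a : Fin r, (φ ⟨i, a⟩).2 = a) := by
  have hfst : ∀ a b : Fin r, (φ ⟨i, a⟩).1 = (φ ⟨i, b⟩).1 := by
    intro a b
    rcases le_total a b with h | h
    · have : φ ⟨i, a⟩ ≤ φ ⟨i, b⟩ := φ.le_iff_le.2 (Sigma.mk_le_mk_iff.2 h)
      exact (Sigma.le_def.1 this).1
    · have : φ ⟨i, b⟩ ≤ φ ⟨i, a⟩ := φ.le_iff_le.2 (Sigma.mk_le_mk_iff.2 h)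
      exact (Sigma.le_def.1 this).1.symm
  refine ⟨hfst, ?_⟩
  have hsm : StrictMono (fun a : Fin r => (φ ⟨i, a⟩).2) := by
    intro a b hab
    have h1 : φ ⟨i, a⟩ < φ ⟨i, b⟩ := φ.lt_iff_lt.2 (Sigma.mk_lt_mk_iff.2 hab)
    obtain ⟨h2, h3⟩ := Sigma.lt_def.1 h1
    dsimp only
    rw [eq_rec_constant] at h3
    exact h3
  intro a
  exact congrFun (strictMono_fin_eq_id _ hsm) a

/-- Swap two summands of a disjoint sum of equal chains, as an order automorphism. -/
def swapIso {t r : ℕ} (i j : Fin t) : (Σ _ : Fin t, Fin r) ≃o (Σ _ : Fin t, Fin r) where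
  toFun x := ⟨Equiv.swap i j x.1, x.2⟩
  invFun x := ⟨Equiv.swap i j x.1, x.2⟩
  left_inv x := by simp
  right_inv x := by simp
  map_rel_iff' := by
    rintro ⟨p, a⟩ ⟨q, b⟩
    simp only [Equiv.coe_fn_mk, Sigma.le_def]
    constructor
    · rintro ⟨h, h2⟩
      exact ⟨(Equiv.swap i j).injective h, by cases (Equiv.swap i j).injective h; exact h2⟩
    · rintro ⟨h, h2⟩
      cases h
      exact ⟨rfl, h2⟩

/-- If `P` is the disjoint sum of `t` chains, each with `r` points, and `k`
is a positive integer with `(k-1)_r < t ≤ (k)_r` (falling factorials), then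
`χ_D(P) = k`. -/
theorem chiD_sum_of_chains (t r k : ℕ) (ht : 0 < t) (hr : 0 < r) (hk : 0 < k)
    (h1 : (k - 1).descFactorial r < t) (h2 : t ≤ k.descFactorial r) :
    chiD (Σ _ : Fin t, Fin r) = k := by
  -- membership of k in the defining set
  have hmem : k ∈ {m | ∃ c : (Σ _ : Fin t, Fin r) → Fin m,
      (∀ x y : (Σ _ : Fin t, Fin r), x < y → c x ≠ c y) ∧ IsDistinguishing c} := by
    -- choose t distinct embeddings Fin r ↪ Fin k
    have hcard : t ≤ Fintype.card (Fin r ↪ Fin k) := by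
      rw [Fintype.card_embedding_eq]
      simpa using h2
    obtain ⟨f, hf⟩ : ∃ f : Fin t → (Fin r ↪ Fin k), Function.Injective f := by
      obtain ⟨f⟩ := Function.Embedding.nonempty_of_card_le
        (α := Fin t) (β := (Fin r ↪ Fin k)) (by simpa using hcard)
      exact ⟨f, f.injective⟩
    refine ⟨fun x => f x.1 x.2, ?_, ?_⟩
    · rintro ⟨p, a⟩ ⟨q, b⟩ hlt
      obtain ⟨h, h2⟩ := Sigma.lt_def.1 hlt
      cases h
      exact fun hc => absurd ((f p).injective hc) (ne_of_lt h2)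
    · intro φ hφ x
      obtain ⟨p, a⟩ := x
      obtain ⟨hfst, hsnd⟩ := auto_structure φ p
      -- φ ⟨p, a⟩ = ⟨σ, a⟩ for σ := (φ ⟨p,a⟩).1
      have key : f (φ ⟨p, a⟩).1 = f p := by
        apply DFunLike.ext
        intro b
        have h := hφ ⟨p, b⟩
        calc f (φ ⟨p, a⟩).1 b = f (φ ⟨p, b⟩).1 b := by rw [hfst a b]
          _ = f (φ ⟨p, b⟩).1 (φ ⟨p, b⟩).2 := by rw [hsnd b]
          _ = f p b := h
      have hp : (φ ⟨p, a⟩).1 = p := hf key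
      have : φ ⟨p, a⟩ = ⟨(φ ⟨p, a⟩).1, (φ ⟨p, a⟩).2⟩ := rfl
      rw [this, hp, hsnd a]
  refine le_antisymm (Nat.sInf_le hmem) ?_
  -- lower bound
  refine le_csInf ⟨k, hmem⟩ ?_
  rintro m ⟨c, hproper, hdist⟩
  by_contra hlt
  push_neg at hlt
  have hm : m ≤ k - 1 := by omega
  -- each chain gives an injective color sequence
  have hinj : ∀ i : Fin t, Function.Injective (fun a : Fin r => c ⟨i, a⟩) := by
    intro i a b hab
    by_contra hne
    rcases lt_or_gt_of_ne hne with h | h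
    · exact hproper ⟨i, a⟩ ⟨i, b⟩ (Sigma.mk_lt_mk_iff.2 h) hab
    · exact hproper ⟨i, b⟩ ⟨i, a⟩ (Sigma.mk_lt_mk_iff.2 h) hab.symm
  set F : Fin t → (Fin r ↪ Fin m) := fun i => ⟨fun a => c ⟨i, a⟩, hinj i⟩ with hF
  have hcard : Fintype.card (Fin r ↪ Fin m) < t := by
    rw [Fintype.card_embedding_eq]
    simp only [Fintype.card_fin]
    exact lt_of_le_of_lt (Nat.descFactorial_le r hm) h1
  have : ¬ Function.Injective F := by
    intro hFi
    have := Fintype.card_le_of_injective F hFi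
    simp only [Fintype.card_fin] at this
    omega
  rw [Function.not_injective_iff] at this
  obtain ⟨i, j, hFij, hij⟩ := this
  -- the swap automorphism preserves colors
  have hpres : ∀ x : (Σ _ : Fin t, Fin r), c (swapIso i j x) = c x := by
    rintro ⟨p, a⟩
    show c ⟨Equiv.swap i j p, a⟩ = c ⟨p, a⟩
    rcases eq_or_ne p i with rfl | hpi
    · rw [Equiv.swap_apply_left]
      exact (DFunLike.congr_fun hFij a).symm
    rcases eq_or_ne p j with rfl | hpj
    · rw [Equiv.swap_apply_right]
      exact DFunLike.congr_fun hFij a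
    · rw [Equiv.swap_apply_of_ne_of_ne hpi hpj]
  have := hdist (swapIso i j) hpres ⟨i, ⟨0, hr⟩⟩
  have : (⟨Equiv.swap i j i, ⟨0, hr⟩⟩ : Σ _ : Fin t, Fin r) = ⟨i, ⟨0, hr⟩⟩ := this
  rw [Equiv.swap_apply_left] at this
  exact hij (congrArg Sigma.fst this).symm
end

section
/- For any finite poset P, the minimum number of colors in a chain-proper coloring of P that is also distinguishing equals the width of P. -/
/-- The least number of colors in a chain-proper (each color class is a chain)
distinguishing coloring of a poset. -/
noncomputable def chainChiD (α : Type*) [PartialOrder α] : ℕ :=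
  sInf {k | ∃ c : α → Fin k, (∀ x y : α, c x = c y → x ≤ y ∨ y ≤ x) ∧ IsDistinguishing c}

/-- The width of a finite poset: the maximum size of an antichain. -/
noncomputable def posetWidth (α : Type*) [PartialOrder α] [Fintype α] : ℕ :=
  sSup {k | ∃ S : Finset α, IsAntichain (· ≤ ·) (S : Set α) ∧ S.card = k}

/-!
Every chain-proper coloring is distinguishing: a color-preserving automorphism `φ` maps each `x`
to a point comparable with it, and on a finite poset `φ x ≤ x` forces `φ x = x` because some
power of `φ` is the identity. So the minimum is the least number of chains covering the poset,
which is the width by Dilworth's theorem.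

Dilworth's theorem is proved following Galvin: remove a maximal element `a` and color the rest
by `k` chains, `k` its width; in each color class take the largest point lying in some maximum
antichain. If no such top lies below `a`, the tops together with `a` form an antichain of size
`k + 1`. Otherwise `a` lies above the top `g` of some class `i`; removing `a` and the points of
class `i` below `g` leaves no antichain of size `k`, as it would meet class `i` below `g`. Either
way a chain containing `a` can be split off so that the width drops.
-/

section FiniteOrderIso

variable {α : Type*} [PartialOrder α] [Finite α]

theorem OrderIso.apply_eq_of_apply_le (φ : α ≃o α) {x : α} (h : φ x ≤ x) : φ x = x := by
  obtain ⟨n, hn, hφn⟩ := (isOfFinOrder_of_finite φ.toEquiv).exists_pow_eq_one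
  obtain ⟨m, rfl⟩ := Nat.exists_eq_add_one_of_ne_zero hn.ne'
  have hiter : φ^[m] x ≤ x := by
    simpa using Function.Commute.id_right.iterate_le_of_map_le φ.monotone monotone_id h m
  have hcycle : φ (φ^[m] x) = x := by
    have := congrArg (· x) hφn
    simpa [Equiv.Perm.coe_pow, Function.iterate_succ_apply'] using this
  refine le_antisymm h ?_
  calc x = φ (φ^[m] x) := hcycle.symm
    _ ≤ φ x := φ.monotone hiter

theorem OrderIso.apply_eq_of_le_apply (φ : α ≃o α) {x : α} (h : x ≤ φ x) : φ x = x :=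
  ((φ.symm_apply_eq).1 <| φ.symm.apply_eq_of_apply_le <| by
    simpa using φ.symm.monotone h).symm

end FiniteOrderIso

theorem isDistinguishing_of_le_or_le {α C : Type*} [PartialOrder α] [Finite α] (c : α → C)
    (hc : ∀ x y : α, c x = c y → x ≤ y ∨ y ≤ x) : IsDistinguishing c :=
  fun φ hφ x => (hc (φ x) x (hφ x)).elim φ.apply_eq_of_apply_le φ.apply_eq_of_le_apply

theorem IsAntichain.injOn_of_le_or_le {α β : Type*} [PartialOrder α] {s : Set α} {c : α → β}
    (hs : IsAntichain (· ≤ ·) s) (hc : ∀ x ∈ s, ∀ y ∈ s, c x = c y → x ≤ y ∨ y ≤ x) :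
    s.InjOn c := by
  intro x hx y hy hxy
  by_contra hne
  exact (hc x hx y hy hxy).elim (hs hx hy hne) (hs hy hx (Ne.symm hne))

namespace Finset

variable {α : Type*} [PartialOrder α] {S T B : Finset α}

open Classical in
noncomputable def width (S : Finset α) : ℕ :=
  (S.powerset.filter fun B : Finset α => IsAntichain (· ≤ ·) (B : Set α)).sup card

/-- Maximum in cardinality, unlike Mathlib's inclusion-maximal `IsMaxAntichain`. -/
def IsMaximumAntichain (S B : Finset α) : Prop :=
  B ⊆ S ∧ IsAntichain (· ≤ ·) (B : Set α) ∧ B.card = S.width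

theorem card_le_width (hBS : B ⊆ S) (hB : IsAntichain (· ≤ ·) (B : Set α)) :
    B.card ≤ S.width := by
  classical
  exact le_sup (f := card) (mem_filter.2 ⟨mem_powerset.2 hBS, hB⟩)

theorem exists_isMaximumAntichain (S : Finset α) : ∃ B, S.IsMaximumAntichain B := by
  classical
  have hempty : ∅ ∈ S.powerset.filter fun B : Finset α => IsAntichain (· ≤ ·) (B : Set α) :=
    mem_filter.2 ⟨empty_mem_powerset S, by simp⟩
  obtain ⟨B, hB, hcard⟩ := exists_mem_eq_sup _ ⟨∅, hempty⟩ card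
  exact ⟨B, mem_powerset.1 (mem_filter.1 hB).1, (mem_filter.1 hB).2, hcard.symm⟩

theorem width_mono (h : S ⊆ T) : S.width ≤ T.width := by
  obtain ⟨B, hBS, hB, hcard⟩ := S.exists_isMaximumAntichain
  exact hcard ▸ card_le_width (hBS.trans h) hB

structure IsChainColoring (S : Finset α) (k : ℕ) (c : α → ℕ) : Prop where
  color_lt : ∀ x ∈ S, c x < k
  le_or_le : ∀ x ∈ S, ∀ y ∈ S, c x = c y → x ≤ y ∨ y ≤ x

namespace IsChainColoring

variable {k l : ℕ} {c : α → ℕ}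

theorem mono (hc : IsChainColoring S k c) (hkl : k ≤ l) : IsChainColoring S l c :=
  ⟨fun x hx => (hc.color_lt x hx).trans_le hkl, hc.le_or_le⟩

theorem union_chain [DecidableEq α] (hc : IsChainColoring T k c) {K : Finset α}
    (hK : IsChain (· ≤ ·) (K : Set α)) :
    IsChainColoring (T ∪ K) (k + 1) fun x => if x ∈ K then k else c x := by
  constructor
  · intro x hx
    split_ifs with hxK
    · exact k.lt_succ_self
    · exact (hc.color_lt x ((mem_union.1 hx).resolve_right hxK)).trans k.lt_succ_self
  · intro x hx y hy hxy
    split_ifs at hxy with hxK hyK hyK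
    · exact hK.total hxK hyK
    · exact absurd hxy (hc.color_lt y ((mem_union.1 hy).resolve_right hyK)).ne'
    · exact absurd hxy (hc.color_lt x ((mem_union.1 hx).resolve_right hxK)).ne
    · exact hc.le_or_le x ((mem_union.1 hx).resolve_right hxK) y
        ((mem_union.1 hy).resolve_right hyK) hxy

theorem exists_color_eq (hc : IsChainColoring S S.width c) (hB : S.IsMaximumAntichain B)
    {i : ℕ} (hi : i < S.width) : ∃ b ∈ B, c b = i := by
  classical
  obtain ⟨hBS, hanti, hcard⟩ := hB
  have hinj : Set.InjOn c B :=
    hanti.injOn_of_le_or_le fun x hx y hy => hc.le_or_le x (hBS hx) y (hBS hy)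
  have himage : B.image c = range S.width := by
    refine eq_of_subset_of_card_le (fun j hj => ?_) ?_
    · obtain ⟨b, hb, rfl⟩ := mem_image.1 hj
      exact mem_range.2 (hc.color_lt b (hBS hb))
    · rw [card_image_of_injOn hinj, hcard, card_range]
  have hmem : i ∈ B.image c := himage ▸ mem_range.2 hi
  simpa using hmem

end IsChainColoring

structure IsColorTop (S : Finset α) (c : α → ℕ) (i : ℕ) (g : α) : Prop where
  color_eq : c g = i
  exists_mem : ∃ B, S.IsMaximumAntichain B ∧ g ∈ B
  le : ∀ B, S.IsMaximumAntichain B → ∀ b ∈ B, c b = i → b ≤ g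

namespace IsColorTop

variable {c : α → ℕ} {i j : ℕ} {g g' : α}

theorem mem (hg : IsColorTop S c i g) : g ∈ S :=
  let ⟨_, ⟨hBS, _⟩, hgB⟩ := hg.exists_mem
  hBS hgB

theorem not_le (hc : IsChainColoring S S.width c) (hg : IsColorTop S c i g)
    (hg' : IsColorTop S c j g') (hij : i ≠ j) : ¬ g ≤ g' := by
  intro hle
  obtain ⟨B, hB, hg'B⟩ := hg'.exists_mem
  obtain ⟨b, hbB, hbc⟩ := hc.exists_color_eq hB (hg.color_eq ▸ hc.color_lt g hg.mem)
  have hbg' : b ≠ g' := by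
    rintro rfl
    exact hij (hbc.symm.trans hg'.color_eq)
  exact hB.2.1 hbB hg'B hbg' ((hg.le B hB b hbB hbc).trans hle)

theorem width_sdiff_lt [DecidableEq α] {L : Finset α}
    (hc : IsChainColoring S S.width c) (hg : IsColorTop S c i g)
    (hL : ∀ x ∈ S, c x = i → x ≤ g → x ∈ L) : (S \ L).width < S.width := by
  obtain ⟨B, hBsub, hanti, hcard⟩ := (S \ L).exists_isMaximumAntichain
  rw [← hcard]
  by_contra! hle
  obtain ⟨B', hB'B, hB'card⟩ := exists_subset_card_eq hle
  have hB'S : B' ⊆ S := hB'B.trans (hBsub.trans sdiff_subset)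
  have hB' : S.IsMaximumAntichain B' := ⟨hB'S, hanti.subset (coe_subset.2 hB'B), hB'card⟩
  obtain ⟨b, hbB', hbc⟩ := hc.exists_color_eq hB' (hg.color_eq ▸ hc.color_lt g hg.mem)
  exact (mem_sdiff.1 (hBsub (hB'B hbB'))).2 (hL b (hB'S hbB') hbc (hg.le B' hB' b hbB' hbc))

end IsColorTop

theorem IsChainColoring.exists_isColorTop {c : α → ℕ} (hc : IsChainColoring S S.width c)
    {i : ℕ} (hi : i < S.width) : ∃ g, IsColorTop S c i g := by
  classical
  set M := S.filter fun x => c x = i ∧ ∃ B, S.IsMaximumAntichain B ∧ x ∈ B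
  have hM : M.Nonempty := by
    obtain ⟨B, hB⟩ := S.exists_isMaximumAntichain
    obtain ⟨b, hbB, hbc⟩ := hc.exists_color_eq hB hi
    exact ⟨b, mem_filter.2 ⟨hB.1 hbB, hbc, B, hB, hbB⟩⟩
  obtain ⟨g, hgM, hgmax⟩ := M.exists_maximal hM
  obtain ⟨hgS, hgc, hgB⟩ := mem_filter.1 hgM
  refine ⟨g, hgc, hgB, fun B hB b hbB hbc => ?_⟩
  have hbM : b ∈ M := mem_filter.2 ⟨hB.1 hbB, hbc, B, hB, hbB⟩
  rcases hc.le_or_le b (hB.1 hbB) g hgS (hbc.trans hgc.symm) with hbg | hgb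
  · exact hbg
  · exact hgmax hbM hgb

theorem width_erase_lt [DecidableEq α] {a : α} (ha : Maximal (· ∈ S) a) {c : α → ℕ}
    (hc : IsChainColoring (S.erase a) (S.erase a).width c)
    (htop : ∀ i g, IsColorTop (S.erase a) c i g → ¬ g ≤ a) : (S.erase a).width < S.width := by
  set k := (S.erase a).width
  have htops : ∀ i, ∃ g, i < k → IsColorTop (S.erase a) c i g := fun i =>
    if hi : i < k then (hc.exists_isColorTop hi).imp fun _ hg _ => hg else ⟨a, fun h => absurd h hi⟩
  choose g hg using htops
  have hinj : Set.InjOn g (range k) := fun i hi j hj hij => by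
    rw [← (hg i (mem_range.1 hi)).color_eq, hij, (hg j (mem_range.1 hj)).color_eq]
  have hsub : (range k).image g ⊆ S.erase a :=
    image_subset_iff.2 fun i hi => (hg i (mem_range.1 hi)).mem
  have hanti : IsAntichain (· ≤ ·) ((range k).image g : Set α) := by
    rw [coe_image, coe_range]
    rintro _ ⟨i, hi, rfl⟩ _ ⟨j, hj, rfl⟩ hne
    exact (hg i hi).not_le hc (hg j hj) fun hij => hne (hij ▸ rfl)
  have hA : IsAntichain (· ≤ ·) ((insert a ((range k).image g) : Finset α) : Set α) := by
    rw [coe_insert]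
    refine hanti.insert (fun b hb _ hba => ?_) (fun b hb hab hle => ?_)
    · obtain ⟨i, hi, rfl⟩ := mem_image.1 hb
      exact htop i _ (hg i (mem_range.1 hi)) hba
    · exact hab (ha.eq_of_le (erase_subset a S (hsub hb)) hle)
  have hcard : (insert a ((range k).image g)).card = k + 1 := by
    rw [card_insert_of_notMem fun h => notMem_erase a S (hsub h), card_image_of_injOn hinj,
      card_range]
  have hle := card_le_width (insert_subset ha.prop (hsub.trans (erase_subset a S))) hA
  rwa [hcard] at hle

theorem exists_chain_width_sdiff_lt [DecidableEq α] (hS : S.Nonempty)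
    (ih : ∀ T ⊂ S, ∃ c, IsChainColoring T T.width c) :
    ∃ K ⊆ S, K.Nonempty ∧ IsChain (· ≤ ·) (K : Set α) ∧ (S \ K).width < S.width := by
  obtain ⟨a, ha⟩ := S.exists_maximal hS
  obtain ⟨c, hc⟩ := ih _ (erase_ssubset ha.prop)
  by_cases htop : ∃ i g, IsColorTop (S.erase a) c i g ∧ g ≤ a
  · classical
    obtain ⟨i, g, hg, hga⟩ := htop
    set L := (S.erase a).filter fun x => c x = i ∧ x ≤ g
    have hL : IsChain (· ≤ ·) (L : Set α) := fun x hx y hy _ => by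
      obtain ⟨hxS, hxc, -⟩ := mem_filter.1 hx
      obtain ⟨hyS, hyc, -⟩ := mem_filter.1 hy
      exact hc.le_or_le x hxS y hyS (hxc.trans hyc.symm)
    refine ⟨insert a L, insert_subset ha.prop ((filter_subset _ _).trans (erase_subset a S)),
      insert_nonempty a L, ?_, ?_⟩
    · rw [coe_insert]
      exact hL.insert fun b hb _ => Or.inr ((mem_filter.1 hb).2.2.trans hga)
    · rw [sdiff_insert, ← erase_sdiff_comm]
      calc (S.erase a \ L).width < (S.erase a).width :=
          hg.width_sdiff_lt hc fun x hx hxc hxg => mem_filter.2 ⟨hx, hxc, hxg⟩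
        _ ≤ S.width := width_mono (erase_subset a S)
  · simp only [not_exists, not_and] at htop
    refine ⟨{a}, singleton_subset_iff.2 ha.prop, singleton_nonempty a, by simp, ?_⟩
    rw [sdiff_singleton_eq_erase]
    exact width_erase_lt ha hc htop

theorem exists_isChainColoring_width (S : Finset α) : ∃ c, IsChainColoring S S.width c := by
  classical
  induction S using Finset.strongInduction with
  | H S ih =>
  rcases S.eq_empty_or_nonempty with rfl | hS
  · exact ⟨fun _ => 0, by simp, by simp⟩
  obtain ⟨K, hKS, hK, hchain, hlt⟩ := exists_chain_width_sdiff_lt hS ih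
  obtain ⟨c, hc⟩ := ih _ (sdiff_ssubset hKS hK)
  have hcolor := (hc.union_chain hchain).mono hlt
  rw [sdiff_union_of_subset hKS] at hcolor
  exact ⟨_, hcolor⟩

end Finset

theorem posetWidth_eq_width_univ (α : Type*) [PartialOrder α] [Fintype α] :
    posetWidth α = (Finset.univ : Finset α).width := by
  obtain ⟨B, -, hB, hcard⟩ := (Finset.univ : Finset α).exists_isMaximumAntichain
  exact IsGreatest.csSup_eq
    ⟨⟨B, hB, hcard⟩, fun _ ⟨A, hA, hk⟩ => hk ▸ Finset.card_le_width (Finset.subset_univ A) hA⟩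

theorem posetWidth_le_of_le_or_le {α : Type*} [PartialOrder α] [Fintype α] {k : ℕ}
    (c : α → Fin k) (hc : ∀ x y : α, c x = c y → x ≤ y ∨ y ≤ x) : posetWidth α ≤ k := by
  classical
  obtain ⟨B, -, hB, hcard⟩ := (Finset.univ : Finset α).exists_isMaximumAntichain
  calc posetWidth α = B.card := (posetWidth_eq_width_univ α).trans hcard.symm
    _ = (B.image c).card :=
      (Finset.card_image_of_injOn (hB.injOn_of_le_or_le fun x _ y _ => hc x y)).symm
    _ ≤ k := (Finset.card_le_univ _).trans_eq (Fintype.card_fin k)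

/-- For any finite poset, the minimum number of colors in a chain-proper
coloring that is also distinguishing equals the width of the poset. -/
theorem chainChiD_eq_width (α : Type*) [PartialOrder α] [Fintype α] :
    chainChiD α = posetWidth α := by
  obtain ⟨c, hc⟩ := (Finset.univ : Finset α).exists_isChainColoring_width
  let d : α → Fin (posetWidth α) := fun x =>
    ⟨c x, posetWidth_eq_width_univ α ▸ hc.color_lt x (Finset.mem_univ x)⟩
  have hd : ∀ x y : α, d x = d y → x ≤ y ∨ y ≤ x := fun x y h =>
    hc.le_or_le x (Finset.mem_univ x) y (Finset.mem_univ y) (Fin.val_eq_of_eq h)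
  have hmem : posetWidth α ∈ {k | ∃ c : α → Fin k,
      (∀ x y : α, c x = c y → x ≤ y ∨ y ≤ x) ∧ IsDistinguishing c} :=
    ⟨d, hd, isDistinguishing_of_le_or_le d hd⟩
  exact le_antisymm (Nat.sInf_le hmem)
    (le_csInf ⟨_, hmem⟩ fun k ⟨c, hc, _⟩ => posetWidth_le_of_le_or_le c hc)
end

section
/- For the Boolean lattice B_n of subsets of {1,…,n} ordered by inclusion, χ_D(B_n) ≤ n + 3. -/
namespace ChiDAux

open Finset

/-- `Sset n i` is the interval `[i, 2i]` inside `Fin n`. -/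
def Sset (n i : ℕ) : Finset (Fin n) :=
  univ.filter (fun k => i ≤ (k : ℕ) ∧ (k : ℕ) ≤ 2 * i)

/-- `Gset n j` is the interval `[n-2j-2, n-j-2]` inside `Fin n`. -/
def Gset (n j : ℕ) : Finset (Fin n) :=
  univ.filter (fun k => n ≤ (k : ℕ) + 2 * j + 2 ∧ (k : ℕ) + j + 2 ≤ n)

lemma mem_Sset {n i : ℕ} {k : Fin n} :
    k ∈ Sset n i ↔ i ≤ (k : ℕ) ∧ (k : ℕ) ≤ 2 * i := by
  simp [Sset]

lemma mem_Gset {n j : ℕ} {k : Fin n} :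
    k ∈ Gset n j ↔ n ≤ (k : ℕ) + 2 * j + 2 ∧ (k : ℕ) + j + 2 ≤ n := by
  simp [Gset]

lemma image_val_Sset {n i : ℕ} (h : 2 * i < n) :
    (Sset n i).image Fin.val = Finset.Icc i (2 * i) := by
  ext x
  simp only [mem_image, mem_Sset, Finset.mem_Icc]
  constructor
  · rintro ⟨a, ⟨h1, h2⟩, rfl⟩; exact ⟨h1, h2⟩
  · rintro ⟨h1, h2⟩; exact ⟨⟨x, by omega⟩, ⟨h1, h2⟩, rfl⟩

lemma card_Sset {n i : ℕ} (h : 2 * i < n) : (Sset n i).card = i + 1 := by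
  have := image_val_Sset h
  have h2 : ((Sset n i).image Fin.val).card = (Sset n i).card :=
    Finset.card_image_of_injective _ Fin.val_injective
  rw [this] at h2
  rw [Nat.card_Icc] at h2
  omega

lemma image_val_Gset {n j : ℕ} (h : 2 * j + 2 ≤ n) :
    (Gset n j).image Fin.val = Finset.Icc (n - 2 * j - 2) (n - j - 2) := by
  ext x
  simp only [mem_image, mem_Gset, Finset.mem_Icc]
  constructor
  · rintro ⟨a, ⟨h1, h2⟩, rfl⟩; omega
  · rintro ⟨h1, h2⟩
    refine ⟨⟨x, by omega⟩, ⟨?_, ?_⟩, rfl⟩ <;> simp <;> omega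

lemma card_Gset {n j : ℕ} (h : 2 * j + 2 ≤ n) : (Gset n j).card = j + 1 := by
  have := image_val_Gset h
  have h2 : ((Gset n j).image Fin.val).card = (Gset n j).card :=
    Finset.card_image_of_injective _ Fin.val_injective
  rw [this] at h2
  rw [Nat.card_Icc] at h2
  omega

lemma Sset_eq_of_subset {n i i' : ℕ} (hi : 2 * i < n) (hi' : 2 * i' < n)
    (h : Sset n i ⊆ Sset n i') : i = i' := by
  have hmem : (⟨i, by omega⟩ : Fin n) ∈ Sset n i := by rw [mem_Sset]; simp; omega
  have h1 := h hmem
  rw [mem_Sset] at h1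
  have h2 : (Sset n i).card ≤ (Sset n i').card := Finset.card_le_card h
  rw [card_Sset hi, card_Sset hi'] at h2
  simp at h1
  omega

lemma Gset_eq_of_subset {n j j' : ℕ} (hj : 2 * j + 2 ≤ n) (hj' : 2 * j' + 2 ≤ n)
    (h : Gset n j ⊆ Gset n j') : j = j' := by
  have hmem : (⟨n - j - 2, by omega⟩ : Fin n) ∈ Gset n j := by rw [mem_Gset]; simp; omega
  have h1 := h hmem
  rw [mem_Gset] at h1
  have h2 : (Gset n j).card ≤ (Gset n j').card := Finset.card_le_card h
  rw [card_Gset hj, card_Gset hj'] at h2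
  simp at h1
  omega

open Classical in
/-- The coloring of `Finset (Fin n)` with `n+3` colors. -/
noncomputable def col (n : ℕ) : Finset (Fin n) → Fin (n + 3) := fun A =>
  if ∃ j, 2 * j + 2 ≤ n ∧ A = Gset n j then ⟨n + 2, by omega⟩
  else if ∃ i, 2 * i < n ∧ A = Sset n i then ⟨n + 1, by omega⟩
  else ⟨A.card, by
    have h := Finset.card_le_univ A
    rw [Fintype.card_fin] at h
    omega⟩

lemma card_le {n : ℕ} (A : Finset (Fin n)) : A.card ≤ n := by
  have h := Finset.card_le_univ A
  rwa [Fintype.card_fin] at h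

lemma col_eq_G_iff {n : ℕ} (A : Finset (Fin n)) :
    col n A = ⟨n + 2, by omega⟩ ↔ ∃ j, 2 * j + 2 ≤ n ∧ A = Gset n j := by
  unfold col
  split_ifs with h1 h2
  · simpa using h1
  · simp only [Fin.mk.injEq]; constructor
    · omega
    · intro h; exact absurd h h1
  · simp only [Fin.mk.injEq]; constructor
    · have := card_le A; omega
    · intro h; exact absurd h h1

lemma col_eq_S_iff {n : ℕ} (A : Finset (Fin n)) :
    col n A = ⟨n + 1, by omega⟩ ↔
      (¬∃ j, 2 * j + 2 ≤ n ∧ A = Gset n j) ∧ ∃ i, 2 * i < n ∧ A = Sset n i := by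
  unfold col
  split_ifs with h1 h2
  · simp only [Fin.mk.injEq]; constructor
    · omega
    · rintro ⟨h, -⟩; exact absurd h1 h
  · simp only [Fin.mk.injEq, true_iff]; exact ⟨h1, h2⟩
  · simp only [Fin.mk.injEq]; constructor
    · have := card_le A; omega
    · rintro ⟨-, h⟩; exact absurd h h2

lemma col_spec {n : ℕ} (A : Finset (Fin n)) :
    ((∃ j, 2 * j + 2 ≤ n ∧ A = Gset n j) ∧ col n A = ⟨n + 2, by omega⟩) ∨
    ((¬∃ j, 2 * j + 2 ≤ n ∧ A = Gset n j) ∧ (∃ i, 2 * i < n ∧ A = Sset n i) ∧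
      col n A = ⟨n + 1, by omega⟩) ∨
    ((¬∃ j, 2 * j + 2 ≤ n ∧ A = Gset n j) ∧ (¬∃ i, 2 * i < n ∧ A = Sset n i) ∧
      col n A = ⟨A.card, by have := card_le A; omega⟩) := by
  unfold col
  split_ifs with h1 h2
  · exact Or.inl ⟨h1, rfl⟩
  · exact Or.inr (Or.inl ⟨h1, h2, rfl⟩)
  · exact Or.inr (Or.inr ⟨h1, h2, rfl⟩)

lemma col_proper {n : ℕ} : ∀ x y : Finset (Fin n), x < y → col n x ≠ col n y := by
  intro x y hxy hc
  have hsub : x ⊆ y := le_of_lt hxy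
  have hcard : x.card < y.card := Finset.card_lt_card hxy
  have hxn := card_le x
  have hyn := card_le y
  rcases col_spec x with ⟨hxg, hcx⟩ | ⟨hxg, hxs, hcx⟩ | ⟨hxg, hxs, hcx⟩ <;>
    rcases col_spec y with ⟨hyg, hcy⟩ | ⟨hyg, hys, hcy⟩ | ⟨hyg, hys, hcy⟩ <;>
      rw [hcx, hcy] at hc <;> simp only [Fin.mk.injEq] at hc
  · obtain ⟨j, hj, rfl⟩ := hxg
    obtain ⟨j', hj', rfl⟩ := hyg
    have := Gset_eq_of_subset hj hj' hsub
    subst this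
    exact absurd rfl (ne_of_lt hxy)
  · omega
  · omega
  · omega
  · obtain ⟨i, hi, rfl⟩ := hxs
    obtain ⟨i', hi', rfl⟩ := hys
    have := Sset_eq_of_subset hi hi' hsub
    subst this
    exact absurd rfl (ne_of_lt hxy)
  · omega
  · omega
  · omega
  · omega

/-- Every order automorphism of `Finset (Fin n)` is induced by an injection on points. -/
lemma exists_perm (n : ℕ) (φ : Finset (Fin n) ≃o Finset (Fin n)) :
    ∃ σ : Fin n → Fin n, Function.Injective σ ∧ ∀ A, φ A = A.image σ := by
  have hbot : φ ⊥ = ⊥ := OrderIso.map_bot φ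
  -- singletons go to singletons
  have hsing : ∀ a : Fin n, ∃ b, φ {a} = {b} := by
    intro a
    have hne : φ {a} ≠ ∅ := by
      intro h
      have : ({a} : Finset (Fin n)) = ⊥ := by
        apply φ.injective
        rw [hbot, h]; rfl
      simp at this
    obtain ⟨b, hb⟩ := Finset.nonempty_iff_ne_empty.mpr hne
    refine ⟨b, ?_⟩
    have h1 : ({b} : Finset (Fin n)) ≤ φ {a} := Finset.singleton_subset_iff.mpr hb
    have h2 : φ.symm {b} ≤ {a} := by
      have := φ.symm.monotone h1
      simpa using this
    have h3 : φ.symm {b} ≠ ∅ := by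
      intro h
      have : ({b} : Finset (Fin n)) = ⊥ := by
        apply φ.symm.injective
        rw [h]
        have : φ.symm ⊥ = ⊥ := OrderIso.map_bot φ.symm
        rw [this]; rfl
      simp at this
    have h4 : φ.symm {b} = {a} := by
      rcases Finset.subset_singleton_iff.mp h2 with h | h
      · exact absurd h h3
      · exact h
    have := congrArg φ h4
    simpa using this.symm
  choose σ hσ using hsing
  have hinj : Function.Injective σ := by
    intro a a' h
    have : φ {a} = φ {a'} := by rw [hσ a, hσ a', h]
    have := φ.injective this
    simpa using this
  refine ⟨σ, hinj, ?_⟩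
  intro A
  induction A using Finset.induction_on with
  | empty => simpa using hbot
  | @insert a s ha ih =>
    have h1 : φ (insert a s) = φ {a} ⊔ φ s := by
      rw [← OrderIso.map_sup]
      congr 1
    rw [h1, hσ a, ih]
    ext t
    simp [Finset.sup_eq_union]
    try tauto

lemma sigma_id {n : ℕ} (σ : Fin n → Fin n) (hinj : Function.Injective σ)
    (hS : ∀ i, 2 * i < n → (Sset n i).image σ = Sset n i)
    (hG : ∀ j, 2 * j + 2 ≤ n → (Gset n j).image σ = Gset n j) :
    ∀ x, σ x = x := by
  -- membership transfer helpers
  have memS : ∀ (i : ℕ) (x : Fin n), 2 * i < n → x ∈ Sset n i → σ x ∈ Sset n i := by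
    intro i x hi hx
    rw [← hS i hi]
    exact Finset.mem_image_of_mem σ hx
  have nmemS : ∀ (i : ℕ) (x : Fin n), 2 * i < n → x ∉ Sset n i → σ x ∉ Sset n i := by
    intro i x hi hx hmem
    rw [← hS i hi] at hmem
    obtain ⟨y, hy, hxy⟩ := Finset.mem_image.mp hmem
    exact hx (hinj hxy ▸ hy)
  have memG : ∀ (j : ℕ) (x : Fin n), 2 * j + 2 ≤ n → x ∈ Gset n j → σ x ∈ Gset n j := by
    intro j x hj hx
    rw [← hG j hj]
    exact Finset.mem_image_of_mem σ hx
  have nmemG : ∀ (j : ℕ) (x : Fin n), 2 * j + 2 ≤ n → x ∉ Gset n j → σ x ∉ Gset n j := by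
    intro j x hj hx hmem
    rw [← hG j hj] at hmem
    obtain ⟨y, hy, hxy⟩ := Finset.mem_image.mp hmem
    exact hx (hinj hxy ▸ hy)
  -- low range: 2x+3 ≤ n
  have low : ∀ x : Fin n, 2 * (x : ℕ) + 3 ≤ n → σ x = x := by
    intro x hx
    have h1 : σ x ∈ Sset n (x : ℕ) := by
      apply memS _ _ (by omega)
      rw [mem_Sset]; omega
    have h2 : σ x ∉ Sset n ((x : ℕ) + 1) := by
      apply nmemS _ _ (by omega)
      rw [mem_Sset]; omega
    rw [mem_Sset] at h1
    rw [mem_Sset] at h2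
    apply Fin.ext
    omega
  -- high range: n ≤ 2x and x + 2 ≤ n
  have high : ∀ x : Fin n, n ≤ 2 * (x : ℕ) → (x : ℕ) + 2 ≤ n → σ x = x := by
    intro x hx1 hx2
    have h1 : σ x ∈ Gset n (n - (x : ℕ) - 2) := by
      apply memG _ _ (by omega)
      rw [mem_Gset]; omega
    have h2 : σ x ∉ Gset n (n - (x : ℕ) - 2 + 1) := by
      apply nmemG _ _ (by omega)
      rw [mem_Gset]; omega
    rw [mem_Gset] at h1
    rw [mem_Gset] at h2
    apply Fin.ext
    omega
  -- all but the top element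
  have hfix : ∀ x : Fin n, (x : ℕ) + 1 ≠ n → σ x = x := by
    intro x hx
    have hxn : (x : ℕ) < n := x.isLt
    by_cases hl : 2 * (x : ℕ) + 3 ≤ n
    · exact low x hl
    by_cases hh : n ≤ 2 * (x : ℕ)
    · exact high x hh (by omega)
    -- middle: 2x+2 ≥ n and 2x < n, x+1 ≠ n
    rcases Nat.even_or_odd n with ⟨m, hm⟩ | ⟨m, hm⟩
    · -- n = 2m, x = m - 1
      have hxval : (x : ℕ) = m - 1 := by omega
      have hm1 : 1 ≤ m := by omega
      have h1 : σ x ∈ Sset n (m - 1) := by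
        apply memS _ _ (by omega)
        rw [mem_Sset]; omega
      rw [mem_Sset] at h1
      by_contra hne
      -- σ x ∈ [m, 2m-2], so σ x is fixed by `high`, contradiction with injectivity
      have hge : n ≤ 2 * ((σ x : ℕ)) := by
        rcases Nat.lt_or_ge (σ x : ℕ) m with h | h
        · exfalso
          have : (σ x : ℕ) = m - 1 := by omega
          exact hne (Fin.ext (by omega))
        · omega
      have hle2 : ((σ x : ℕ)) + 2 ≤ n := by omega
      have := high (σ x) hge hle2
      exact hne (hinj this)
    · -- n = 2m+1, x = m
      have hxval : (x : ℕ) = m := by omega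
      have hm1 : 1 ≤ m := by omega
      have h1 : σ x ∈ Gset n (m - 1) := by
        apply memG _ _ (by omega)
        rw [mem_Gset]; omega
      rw [mem_Gset] at h1
      by_contra hne
      -- σ x ∈ [1, m], σ x ≠ m, so σ x fixed by `low`
      have hlo : 2 * ((σ x : ℕ)) + 3 ≤ n := by
        rcases Nat.lt_or_ge (σ x : ℕ) m with h | h
        · omega
        · exfalso
          have : (σ x : ℕ) = m := by omega
          exact hne (Fin.ext (by omega))
      have := low (σ x) hlo
      exact hne (hinj this)
  -- top element by injectivity
  intro x
  by_cases hx : (x : ℕ) + 1 = n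
  · by_cases h : σ x = x
    · exact h
    · have hne : ((σ x : ℕ)) + 1 ≠ n := by
        intro hh
        exact h (Fin.ext (by omega))
      have := hfix (σ x) hne
      exact absurd (hinj this) h
  · exact hfix x hx

lemma col_distinguishing {n : ℕ} : IsDistinguishing (col n) := by
  intro φ hc x
  obtain ⟨σ, hinj, hφ⟩ := exists_perm n φ
  have himgcard : ∀ A : Finset (Fin n), (A.image σ).card = A.card := fun A =>
    Finset.card_image_of_injective A hinj
  -- σ preserves each Gset
  have hG : ∀ j, 2 * j + 2 ≤ n → (Gset n j).image σ = Gset n j := by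
    intro j hj
    have h1 : col n (Gset n j) = ⟨n + 2, by omega⟩ :=
      (col_eq_G_iff _).mpr ⟨j, hj, rfl⟩
    have h2 : col n (φ (Gset n j)) = ⟨n + 2, by omega⟩ := by rw [hc, h1]
    rw [col_eq_G_iff] at h2
    obtain ⟨j', hj', hEq⟩ := h2
    rw [hφ] at hEq
    have hcard : ((Gset n j).image σ).card = j + 1 := by
      rw [himgcard, card_Gset hj]
    rw [hEq, card_Gset hj'] at hcard
    have : j = j' := by omega
    rw [hEq, this]
  -- σ preserves each Sset
  have hS : ∀ i, 2 * i < n → (Sset n i).image σ = Sset n i := by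
    intro i hi
    by_cases hg : ∃ j, 2 * j + 2 ≤ n ∧ Sset n i = Gset n j
    · obtain ⟨j, hj, hEq⟩ := hg
      rw [hEq]
      exact hG j hj
    · have h1 : col n (Sset n i) = ⟨n + 1, by omega⟩ :=
        (col_eq_S_iff _).mpr ⟨hg, i, hi, rfl⟩
      have h2 : col n (φ (Sset n i)) = ⟨n + 1, by omega⟩ := by rw [hc, h1]
      rw [col_eq_S_iff] at h2
      obtain ⟨-, i', hi', hEq⟩ := h2
      rw [hφ] at hEq
      have hcard : ((Sset n i).image σ).card = i + 1 := by
        rw [himgcard, card_Sset hi]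
      rw [hEq, card_Sset hi'] at hcard
      have : i = i' := by omega
      rw [hEq, this]
  have hid := sigma_id σ hinj hS hG
  rw [hφ]
  have : σ = id := funext hid
  rw [this, Finset.image_id]

end ChiDAux

/-- For the Boolean lattice `B_n` of subsets of an `n`-element set ordered
by inclusion, `χ_D(B_n) ≤ n + 3`. -/
theorem chiD_boolean_le (n : ℕ) : chiD (Finset (Fin n)) ≤ n + 3 := by
  apply Nat.sInf_le
  exact ⟨ChiDAux.col n, ChiDAux.col_proper, ChiDAux.col_distinguishing⟩
end

section
/- The Boolean lattice B_3 of subsets of a 3-element set has distinguishing chromatic number χ_D(B_3) = 5. -/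
/- ### Auxiliary material -/

set_option synthInstance.maxSize 4000
set_option synthInstance.maxHeartbeats 2000000
set_option maxHeartbeats 4000000

/-- The explicit 5-coloring of `B_3`. -/
def myc (X : Finset (Fin 3)) : Fin 5 :=
  if X = ∅ then 0
  else if X = {0} ∨ X = {1, 2} then 1
  else if X = {1} ∨ X = {0, 2} then 2
  else if X = {2} ∨ X = {0, 1} then 4
  else 3

/-- The order automorphism of `Finset (Fin 3)` induced by a permutation. -/
def permIso (π : Equiv.Perm (Fin 3)) : Finset (Fin 3) ≃o Finset (Fin 3) where
  toEquiv := π.finsetCongr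
  map_rel_iff' := by
    intro a b
    simp [Equiv.finsetCongr_apply]

lemma permIso_apply (π : Equiv.Perm (Fin 3)) (x : Finset (Fin 3)) :
    permIso π x = x.map π.toEmbedding := rfl

lemma pigeon3 : ∀ a b x y z : Fin 4, a ≠ b → x ≠ a → x ≠ b → y ≠ a → y ≠ b →
    z ≠ a → z ≠ b → x = y ∨ x = z ∨ y = z := by decide

lemma pigeon4 : ∀ a b s u v : Fin 4, a ≠ b → s ≠ a → s ≠ b → u ≠ a → u ≠ b → u ≠ s →
    v ≠ a → v ≠ b → v ≠ s → u = v := by decide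

lemma enum8 : ∀ i j k : Fin 3, i ≠ j → i ≠ k → j ≠ k → ∀ x : Finset (Fin 3),
    x = ∅ ∨ x = {i} ∨ x = {j} ∨ x = {k} ∨ x = {i, j} ∨ x = {i, k} ∨ x = {j, k} ∨
    x = Finset.univ := by decide

lemma swap_facts : ∀ i j k : Fin 3, i ≠ j → i ≠ k → j ≠ k →
    ((∅ : Finset (Fin 3)).map (Equiv.swap i j).toEmbedding = ∅ ∧
     ({i} : Finset (Fin 3)).map (Equiv.swap i j).toEmbedding = {j} ∧
     ({j} : Finset (Fin 3)).map (Equiv.swap i j).toEmbedding = {i} ∧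
     ({k} : Finset (Fin 3)).map (Equiv.swap i j).toEmbedding = {k} ∧
     ({i, j} : Finset (Fin 3)).map (Equiv.swap i j).toEmbedding = {i, j} ∧
     ({i, k} : Finset (Fin 3)).map (Equiv.swap i j).toEmbedding = {j, k} ∧
     ({j, k} : Finset (Fin 3)).map (Equiv.swap i j).toEmbedding = {i, k} ∧
     (Finset.univ : Finset (Fin 3)).map (Equiv.swap i j).toEmbedding = Finset.univ) := by
  decide

lemma order_facts : ∀ i j k : Fin 3, i ≠ j → i ≠ k → j ≠ k →
    ((∅ : Finset (Fin 3)) < Finset.univ ∧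
     (∅ : Finset (Fin 3)) < {i} ∧ ({i} : Finset (Fin 3)) < Finset.univ ∧
     (∅ : Finset (Fin 3)) < {j} ∧ ({j} : Finset (Fin 3)) < Finset.univ ∧
     (∅ : Finset (Fin 3)) < {i, k} ∧ ({i, k} : Finset (Fin 3)) < Finset.univ ∧
     ({i} : Finset (Fin 3)) < {i, k} ∧
     (∅ : Finset (Fin 3)) < {j, k} ∧ ({j, k} : Finset (Fin 3)) < Finset.univ ∧
     ({j} : Finset (Fin 3)) < {j, k} ∧
     ({i} : Finset (Fin 3)) ≠ {j}) := by decide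

/-- Key step of the lower bound: if two singletons get the same color,
the coloring is not distinguishing. -/
lemma key (c : Finset (Fin 3) → Fin 4)
    (hp : ∀ x y : Finset (Fin 3), x < y → c x ≠ c y)
    (hd : IsDistinguishing c) (i j k : Fin 3) (hij : i ≠ j) (hik : i ≠ k)
    (hjk : j ≠ k) (hs : c {i} = c {j}) : False := by
  obtain ⟨o1, o2, o3, o4, o5, o6, o7, o8, o9, o10, o11, o12⟩ :=
    order_facts i j k hij hik hjk
  have hab : c ∅ ≠ c Finset.univ := hp _ _ o1
  have h2 : c ({i, k} : Finset (Fin 3)) = c ({j, k} : Finset (Fin 3)) := by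
    refine pigeon4 (c ∅) (c Finset.univ) (c {i}) _ _ hab (Ne.symm (hp _ _ o2))
      (hp _ _ o3) (Ne.symm (hp _ _ o6)) (hp _ _ o7) (Ne.symm (hp _ _ o8))
      (Ne.symm (hp _ _ o9)) (hp _ _ o10) ?_
    rw [hs]; exact Ne.symm (hp _ _ o11)
  obtain ⟨m1, m2, m3, m4, m5, m6, m7, m8⟩ := swap_facts i j k hij hik hjk
  have hpres : ∀ x, c (permIso (Equiv.swap i j) x) = c x := by
    intro x
    rcases enum8 i j k hij hik hjk x with h | h | h | h | h | h | h | h <;>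
      subst h <;> rw [permIso_apply]
    · rw [m1]
    · rw [m2]; exact hs.symm
    · rw [m3]; exact hs
    · rw [m4]
    · rw [m5]
    · rw [m6]; exact h2.symm
    · rw [m7]; exact h2
    · rw [m8]
  have := hd (permIso (Equiv.swap i j)) hpres {i}
  rw [permIso_apply, m2] at this
  exact o12 this.symm

/-- No proper distinguishing coloring with 4 colors. -/
lemma no4 (c : Finset (Fin 3) → Fin 4)
    (hp : ∀ x y : Finset (Fin 3), x < y → c x ≠ c y)
    (hd : IsDistinguishing c) : False := by
  obtain ⟨o1, o2, o3, o4, o5, _⟩ :=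
    order_facts (0 : Fin 3) 1 2 (by decide) (by decide) (by decide)
  have hc2 : (∅ : Finset (Fin 3)) < {2} := by decide
  have hc2' : ({2} : Finset (Fin 3)) < Finset.univ := by decide
  rcases pigeon3 (c ∅) (c Finset.univ) (c {0}) (c {1}) (c {2}) (hp _ _ o1)
      (Ne.symm (hp _ _ o2)) (hp _ _ o3) (Ne.symm (hp _ _ o4)) (hp _ _ o5)
      (Ne.symm (hp _ _ hc2)) (hp _ _ hc2') with h | h | h
  · exact key c hp hd 0 1 2 (by decide) (by decide) (by decide) h
  · exact key c hp hd 0 2 1 (by decide) (by decide) (by decide) h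
  · exact key c hp hd 1 2 0 (by decide) (by decide) (by decide) h

lemma atom_fixed (φ : Finset (Fin 3) ≃o Finset (Fin 3))
    (hbot : φ ∅ = ∅) (a d e : Finset (Fin 3)) (hφa : φ a = a ∨ φ a = d)
    (he : e < d) (hlt : ∀ z : Finset (Fin 3), z < a → z = ∅) (hne : e ≠ ∅) :
    φ a = a := by
  rcases hφa with h | h
  · exact h
  · exfalso
    have h1 : φ.symm e < φ.symm d := φ.symm.lt_iff_lt.mpr he
    have h2 : φ.symm d = a := by rw [← h, φ.symm_apply_apply]
    rw [h2] at h1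
    have h3 := hlt _ h1
    have : e = φ ∅ := by rw [← h3, φ.apply_symm_apply]
    rw [hbot] at this
    exact hne this

/-- The explicit coloring is proper. -/
lemma myc_proper : ∀ x y : Finset (Fin 3), x < y → myc x ≠ myc y := by decide

lemma myc_class1 : ∀ y : Finset (Fin 3), myc y = myc {0} → y = {0} ∨ y = {1, 2} := by
  decide
lemma myc_class2 : ∀ y : Finset (Fin 3), myc y = myc {1} → y = {1} ∨ y = {0, 2} := by
  decide
lemma myc_class3 : ∀ y : Finset (Fin 3), myc y = myc {2} → y = {2} ∨ y = {0, 1} := by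
  decide

/-- The explicit coloring is distinguishing. -/
lemma myc_dist : IsDistinguishing myc := by
  intro φ h
  have hbot : φ ∅ = ∅ := by
    have := φ.map_bot
    simpa using this
  have htop : φ Finset.univ = Finset.univ := by
    have := φ.map_top
    simpa using this
  have h0 : φ {0} = {0} :=
    atom_fixed φ hbot {0} {1, 2} {1} (myc_class1 _ (h {0})) (by decide)
      (by decide) (by decide)
  have h1 : φ {1} = {1} :=
    atom_fixed φ hbot {1} {0, 2} {0} (myc_class2 _ (h {1})) (by decide)
      (by decide) (by decide)
  have h2 : φ {2} = {2} :=
    atom_fixed φ hbot {2} {0, 1} {0} (myc_class3 _ (h {2})) (by decide)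
      (by decide) (by decide)
  have hsup : ∀ a b : Finset (Fin 3), φ (a ⊔ b) = φ a ⊔ φ b := φ.map_sup
  intro x
  have e01 : ({0, 1} : Finset (Fin 3)) = {0} ⊔ {1} := by decide
  have e02 : ({0, 2} : Finset (Fin 3)) = {0} ⊔ {2} := by decide
  have e12 : ({1, 2} : Finset (Fin 3)) = {1} ⊔ {2} := by decide
  rcases enum8 0 1 2 (by decide) (by decide) (by decide) x with
    hx | hx | hx | hx | hx | hx | hx | hx <;> subst hx
  · exact hbot
  · exact h0
  · exact h1
  · exact h2
  · rw [e01, hsup, h0, h1]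
  · rw [e02, hsup, h0, h2]
  · rw [e12, hsup, h1, h2]
  · exact htop

/-- The Boolean lattice `B_3` has distinguishing chromatic number 5. -/
theorem chiD_boolean_three : chiD (Finset (Fin 3)) = 5 := by
  have h5 : 5 ∈ {k | ∃ c : Finset (Fin 3) → Fin k,
      (∀ x y : Finset (Fin 3), x < y → c x ≠ c y) ∧ IsDistinguishing c} :=
    ⟨myc, myc_proper, myc_dist⟩
  refine le_antisymm (Nat.sInf_le h5) ?_
  refine le_csInf ⟨5, h5⟩ ?_
  rintro m ⟨c, hp, hd⟩
  by_contra hlt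
  push_neg at hlt
  have hm4 : m ≤ 4 := by omega
  set c' : Finset (Fin 3) → Fin 4 := fun x => Fin.castLE hm4 (c x) with hc'
  have hinj : ∀ u v : Fin m, Fin.castLE hm4 u = Fin.castLE hm4 v → u = v := by
    intro u v huv
    exact Fin.ext (by simpa [Fin.castLE] using congrArg Fin.val huv)
  refine no4 c' (fun x y hxy h => hp x y hxy (hinj _ _ h)) ?_
  intro φ hφ
  exact hd φ (fun x => hinj _ _ (hφ x))
end

section
/- For every M > 0 there exists a finite poset P such that χ_D(G_P) − χ_D(P) > M, where G_P is the comparability graph of P. Specifically, for j ≥ 3, the poset P consisting of C(2j, j) disjoint j-chains satisfies χ_D(P) ≤ j+1 while χ_D(G_P) = 2j. -/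
/-- The comparability graph of a poset. -/
def compGraph (α : Type*) [PartialOrder α] : SimpleGraph α where
  Adj x y := x ≠ y ∧ (x ≤ y ∨ y ≤ x)
  symm := by
    constructor
    rintro x y ⟨hne, h⟩
    exact ⟨hne.symm, h.symm⟩
  loopless := by constructor; rintro x ⟨hne, -⟩; exact hne rfl

/-- The distinguishing chromatic number of a graph: least number of colors in a proper
coloring such that the only color-preserving graph automorphism is the identity. -/
noncomputable def graphChiD {V : Type*} (G : SimpleGraph V) : ℕ :=
  sInf {k | ∃ c : V → Fin k, (∀ x y : V, G.Adj x y → c x ≠ c y) ∧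
    ∀ φ : G ≃g G, (∀ x, c (φ x) = c x) → ∀ x, φ x = x}

/-!
An order automorphism of a disjoint union of `j`-chains permutes the chains, and since a finite
chain has no nontrivial automorphism it preserves heights. Hence coloring the chains by pairwise
distinct injective words `Fin j ↪ Fin (j + 1)` is proper and distinguishing, and there are
`(j + 1)! ≥ C(2j, j)` such words.

The comparability graph is a disjoint union of cliques `K_j`, whose points may be permuted freely
inside each chain; so a proper coloring is distinguishing exactly when the chains receive pairwise
distinct color sets. With `k` colors there are `C(k, j)` such sets, fewer than `C(2j, j)` when
`k < 2j`.
-/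

open Function Finset

namespace Nat

theorem centralBinom_le_factorial_succ {n : ℕ} (hn : 3 ≤ n) : centralBinom n ≤ (n + 1)! := by
  induction n, hn using Nat.le_induction with
  | base => decide
  | succ n _ ih =>
    refine Nat.le_of_mul_le_mul_left ?_ n.succ_pos
    calc (n + 1) * centralBinom (n + 1) = 2 * (2 * n + 1) * centralBinom n :=
          succ_mul_centralBinom_succ n
      _ ≤ (n + 1) * (n + 2) * (n + 1)! := Nat.mul_le_mul (by nlinarith) ih
      _ = (n + 1) * (n + 2)! := by rw [factorial_succ (n + 1)]; ring

theorem succ_descFactorial_self (n : ℕ) : (n + 1).descFactorial n = (n + 1)! := by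
  simpa [descFactorial_succ] using descFactorial_self (n + 1)

theorem choose_lt_choose_two_mul {j k : ℕ} (hj : j ≠ 0) (hk : k < 2 * j) :
    k.choose j < (2 * j).choose j := by
  obtain ⟨j, rfl⟩ := exists_eq_succ_of_ne_zero hj
  have hpos : 0 < (2 * j + 1).choose j := choose_pos (by omega)
  calc k.choose (j + 1) ≤ (2 * j + 1).choose (j + 1) := choose_le_choose _ (by omega)
    _ < (2 * j + 1).choose j + (2 * j + 1).choose (j + 1) := by omega
    _ = (2 * (j + 1)).choose (j + 1) := (choose_succ_succ (2 * j + 1) j).symm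

theorem sInf_choose_ge_choose_two_mul {j : ℕ} (hj : j ≠ 0) :
    sInf {k | (2 * j).choose j ≤ k.choose j} = 2 * j := by
  have hmem : 2 * j ∈ {k | (2 * j).choose j ≤ k.choose j} := le_refl ((2 * j).choose j)
  exact le_antisymm (Nat.sInf_le hmem) <| le_csInf ⟨_, hmem⟩ fun _ hk =>
    not_lt.1 fun hlt => (choose_lt_choose_two_mul hj hlt).not_ge hk

end Nat

theorem exists_perm_comp_eq_of_range_eq {α β : Type*} {u v : α → β} (hu : Injective u)
    (hv : Injective v) (h : Set.range u = Set.range v) : ∃ e : Equiv.Perm α, ∀ x, v (e x) = u x :=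
  ⟨(Equiv.ofInjective u hu).trans ((Equiv.setCongr h).trans (Equiv.ofInjective v hv).symm),
    fun x => by simp [Equiv.apply_ofInjective_symm]⟩

def IsGraphDistinguishing {V C : Type*} (G : SimpleGraph V) (c : V → C) : Prop :=
  ∀ φ : G ≃g G, (∀ x, c (φ x) = c x) → ∀ x, φ x = x

section Chains

variable {ι C : Type*} {j : ℕ}

theorem orderIso_sigma_fin_apply (φ : (Σ _ : ι, Fin j) ≃o (Σ _ : ι, Fin j)) (i : ι)
    (x y : Fin j) : φ ⟨i, x⟩ = ⟨(φ ⟨i, y⟩).1, x⟩ := by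
  have fst_eq : (φ ⟨i, x⟩).1 = (φ ⟨i, y⟩).1 := by
    rcases le_total x y with h | h
    · exact (Sigma.le_def.1 (φ.monotone (Sigma.mk_le_mk_iff.2 h))).1
    · exact (Sigma.le_def.1 (φ.monotone (Sigma.mk_le_mk_iff.2 h))).1.symm
  have snd_eq : (φ ⟨i, x⟩).2 = x := by
    refine StrictMono.apply_eq (f := fun x => (φ ⟨i, x⟩).2) fun x x' hx => ?_
    obtain ⟨_, h⟩ := Sigma.lt_def.1 (φ.strictMono (Sigma.mk_lt_mk_iff.2 hx))
    simpa using h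
  calc φ ⟨i, x⟩ = ⟨(φ ⟨i, x⟩).1, (φ ⟨i, x⟩).2⟩ := rfl
    _ = ⟨(φ ⟨i, y⟩).1, x⟩ := by rw [snd_eq, fst_eq]

theorem isDistinguishing_sigma_fin {c : (Σ _ : ι, Fin j) → C}
    (hc : Injective fun i x => c ⟨i, x⟩) : IsDistinguishing c := by
  rintro φ hφ ⟨i, x⟩
  have hi : (φ ⟨i, x⟩).1 = i := hc <| funext fun y => by
    dsimp only
    rw [← orderIso_sigma_fin_apply φ i y x, hφ]
  rw [orderIso_sigma_fin_apply φ i x x, hi]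

theorem chiD_sigma_fin_le [Fintype ι] {m : ℕ} (h : Fintype.card ι ≤ m.descFactorial j) :
    chiD (Σ _ : ι, Fin j) ≤ m := by
  obtain ⟨f⟩ : Nonempty (ι ↪ (Fin j ↪ Fin m)) := by
    rwa [Embedding.nonempty_iff_card_le, Fintype.card_embedding_eq, Fintype.card_fin,
      Fintype.card_fin]
  refine Nat.sInf_le ⟨fun p => f p.1 p.2, ?_, isDistinguishing_sigma_fin ?_⟩
  · rintro _ _ ⟨i, x, y, hxy⟩
    exact (f i).injective.ne hxy.ne
  · exact DFunLike.coe_injective.comp f.injective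

end Chains

section Graph

variable {ι C : Type*} {α : ι → Type*} [∀ i, LinearOrder (α i)] {j : ℕ}

theorem compGraph_sigma_adj_iff {p q : Σ i, α i} :
    (compGraph (Σ i, α i)).Adj p q ↔ p.1 = q.1 ∧ p ≠ q := by
  refine ⟨fun ⟨hne, hpq⟩ => ⟨?_, hne⟩, fun ⟨hfst, hne⟩ => ⟨hne, ?_⟩⟩
  · rcases hpq with h | h
    exacts [(Sigma.le_def.1 h).1, (Sigma.le_def.1 h).1.symm]
  · obtain ⟨i, x⟩ := p
    obtain ⟨i', y⟩ := q
    obtain rfl : i = i' := hfst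
    simpa only [Sigma.mk_le_mk_iff] using le_total x y

theorem compGraph_sigma_proper_iff {c : (Σ i, α i) → C} :
    (∀ p q, (compGraph (Σ i, α i)).Adj p q → c p ≠ c q) ↔ ∀ i, Injective fun x => c ⟨i, x⟩ := by
  refine ⟨fun h i x y hxy => by_contra fun hne => ?_, fun h p q hpq => ?_⟩
  · exact h ⟨i, x⟩ ⟨i, y⟩ (compGraph_sigma_adj_iff.2 ⟨rfl, sigma_mk_injective.ne hne⟩) hxy
  · obtain ⟨i, x⟩ := p
    obtain ⟨i', y⟩ := q
    obtain ⟨rfl, hne⟩ := compGraph_sigma_adj_iff.1 hpq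
    exact (h i).ne fun hxy => hne (hxy ▸ rfl)

theorem compGraph_sigma_iso_fst_eq (φ : compGraph (Σ i, α i) ≃g compGraph (Σ i, α i)) (i : ι)
    (x y : α i) : (φ ⟨i, x⟩).1 = (φ ⟨i, y⟩).1 := by
  by_cases hxy : x = y
  · rw [hxy]
  · refine (compGraph_sigma_adj_iff.1 (φ.map_adj_iff.2 ?_)).1
    exact compGraph_sigma_adj_iff.2 ⟨rfl, sigma_mk_injective.ne hxy⟩

/-- `⟨i, x⟩ ↦ ⟨σ i, τ i x⟩`, an automorphism because the comparability graph of disjoint chains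
is a disjoint union of cliques. -/
def compGraphSigmaCongr (σ : Equiv.Perm ι) (τ : ι → Equiv.Perm (Fin j)) :
    compGraph (Σ _ : ι, Fin j) ≃g compGraph (Σ _ : ι, Fin j) where
  toEquiv := Equiv.sigmaCongr (β₁ := fun _ => Fin j) (β₂ := fun _ => Fin j) σ τ
  map_rel_iff' {p q} := by
    rw [compGraph_sigma_adj_iff, compGraph_sigma_adj_iff]
    exact and_congr σ.injective.eq_iff (Equiv.injective _).ne_iff

variable [DecidableEq C]

def chainColors (c : (Σ _ : ι, Fin j) → C) (i : ι) : Finset C :=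
  univ.image fun x => c ⟨i, x⟩

theorem isGraphDistinguishing_of_injective_chainColors {c : (Σ _ : ι, Fin j) → C}
    (hinj : ∀ i, Injective fun x => c ⟨i, x⟩) (hcol : Injective (chainColors c)) :
    IsGraphDistinguishing (compGraph (Σ _ : ι, Fin j)) c := by
  rintro φ hφ ⟨i, x⟩
  set i' := (φ ⟨i, x⟩).1
  set τ : Fin j → Fin j := fun y => (φ ⟨i, y⟩).2
  have hφτ (y : Fin j) : φ ⟨i, y⟩ = (⟨i', τ y⟩ : Σ _ : ι, Fin j) := by
    change (⟨(φ ⟨i, y⟩).1, (φ ⟨i, y⟩).2⟩ : Σ _ : ι, Fin j) = _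
    rw [compGraph_sigma_iso_fst_eq φ i y x]
  have hτ : Surjective τ := Finite.surjective_of_injective fun y y' h => by
    simpa using sigma_mk_injective <| φ.injective ((hφτ y).trans (h ▸ (hφτ y').symm))
  have hi : i' = i := hcol <| by
    calc chainColors c i' = (univ.image τ).image fun y => c ⟨i', y⟩ := by
          rw [image_univ_of_surjective hτ, chainColors]
      _ = chainColors c i := by
          simp only [chainColors, image_image, comp_def, ← hφτ, hφ]
  have hx : τ x = x := hinj i <| calc
    c ⟨i, τ x⟩ = c ⟨i', τ x⟩ := by rw [hi]
    _ = c ⟨i, x⟩ := by rw [← hφτ, hφ]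
  rw [hφτ x, hi, hx]

theorem injective_chainColors_of_isGraphDistinguishing (hj : j ≠ 0) {c : (Σ _ : ι, Fin j) → C}
    (hinj : ∀ i, Injective fun x => c ⟨i, x⟩)
    (hc : IsGraphDistinguishing (compGraph (Σ _ : ι, Fin j)) c) : Injective (chainColors c) := by
  classical
  intro a b hab
  by_contra hne
  have hrange : Set.range (fun x => c ⟨a, x⟩) = Set.range fun x => c ⟨b, x⟩ := by
    simpa [chainColors] using congrArg (fun s : Finset C => (s : Set C)) hab
  obtain ⟨e, he⟩ := exists_perm_comp_eq_of_range_eq (hinj a) (hinj b) hrange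
  -- swap the chains `a` and `b`, matching equal colors through `e`
  let τ (i : ι) : Equiv.Perm (Fin j) := if i = a then e else if i = b then e.symm else 1
  have hpres (p : Σ _ : ι, Fin j) : c (compGraphSigmaCongr (Equiv.swap a b) τ p) = c p := by
    obtain ⟨i, x⟩ := p
    change c ⟨Equiv.swap a b i, τ i x⟩ = c ⟨i, x⟩
    by_cases hia : i = a
    · subst hia
      simp [τ, he]
    by_cases hib : i = b
    · subst hib
      simpa [τ, hia] using (he (e.symm x)).symm
    · simp [τ, hia, hib, Equiv.swap_apply_of_ne_of_ne hia hib]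
  have hfst : Equiv.swap a b a = a :=
    congrArg Sigma.fst (hc _ hpres ⟨a, ⟨0, Nat.pos_of_ne_zero hj⟩⟩)
  exact hne (by simpa using hfst.symm)

theorem card_le_choose_of_injective_chainColors [Fintype ι] [Fintype C]
    {c : (Σ _ : ι, Fin j) → C} (hinj : ∀ i, Injective fun x => c ⟨i, x⟩)
    (hcol : Injective (chainColors c)) : Fintype.card ι ≤ (Fintype.card C).choose j := by
  let F (i : ι) : {s : Finset C // s.card = j} := ⟨chainColors c i, by
    rw [chainColors, card_image_of_injective _ (hinj i), card_univ, Fintype.card_fin]⟩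
  simpa [Fintype.card_finset_len] using
    Fintype.card_le_of_injective F fun a b h => hcol (congrArg Subtype.val h)

theorem exists_injective_chainColors [Fintype ι] {k : ℕ} (h : Fintype.card ι ≤ k.choose j) :
    ∃ c : (Σ _ : ι, Fin j) → Fin k,
      (∀ i, Injective fun x => c ⟨i, x⟩) ∧ Injective (chainColors c) := by
  obtain ⟨g⟩ : Nonempty (ι ↪ {s : Finset (Fin k) // s.card = j}) := by
    rwa [Embedding.nonempty_iff_card_le, Fintype.card_finset_len, Fintype.card_fin]
  refine ⟨fun p => (g p.1).1.orderEmbOfFin (g p.1).2 p.2,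
    fun i => ((g i).1.orderEmbOfFin (g i).2).injective, fun a b hab => g.injective (Subtype.ext ?_)⟩
  change univ.image ((g a).1.orderEmbOfFin (g a).2) = univ.image ((g b).1.orderEmbOfFin (g b).2)
    at hab
  simpa using hab

end Graph

theorem graphChiD_compGraph_sigma_fin {ι : Type*} [Fintype ι] {j : ℕ} (hj : j ≠ 0) :
    graphChiD (compGraph (Σ _ : ι, Fin j)) = sInf {k | Fintype.card ι ≤ k.choose j} := by
  refine congrArg sInf (Set.ext fun k => ⟨?_, fun h => ?_⟩)
  · rintro ⟨c, hproper, hdist⟩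
    rw [compGraph_sigma_proper_iff] at hproper
    simpa using card_le_choose_of_injective_chainColors hproper
      (injective_chainColors_of_isGraphDistinguishing hj hproper hdist)
  · obtain ⟨c, hinj, hcol⟩ := exists_injective_chainColors h
    exact ⟨c, compGraph_sigma_proper_iff.2 hinj,
      isGraphDistinguishing_of_injective_chainColors hinj hcol⟩

/-- The gap between the distinguishing chromatic number of a poset and that
of its comparability graph can be arbitrarily large.  Specifically, for `j ≥ 3`, the
poset `P` consisting of `C(2j, j)` disjoint `j`-chains satisfies `χ_D(P) ≤ j + 1` while
`χ_D(G_P) = 2j`; in particular, for every `M > 0` there is a finite poset `P` with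
`χ_D(G_P) - χ_D(P) > M`. -/
theorem chiD_comparability_gap :
    (∀ j : ℕ, 3 ≤ j →
      chiD (Σ _ : Fin ((2 * j).choose j), Fin j) ≤ j + 1 ∧
      graphChiD (compGraph (Σ _ : Fin ((2 * j).choose j), Fin j)) = 2 * j) ∧
    (∀ M : ℕ, 0 < M → ∃ (α : Type) (inst : PartialOrder α) (_ : Fintype α),
      M < @graphChiD α (@compGraph α inst) - @chiD α inst) := by
  have chains (j : ℕ) (hj : 3 ≤ j) :
      chiD (Σ _ : Fin ((2 * j).choose j), Fin j) ≤ j + 1 ∧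
      graphChiD (compGraph (Σ _ : Fin ((2 * j).choose j), Fin j)) = 2 * j := by
    refine ⟨chiD_sigma_fin_le ?_, ?_⟩
    · rw [Fintype.card_fin, Nat.succ_descFactorial_self, ← Nat.centralBinom_eq_two_mul_choose]
      exact Nat.centralBinom_le_factorial_succ hj
    · rw [graphChiD_compGraph_sigma_fin (by omega), Fintype.card_fin]
      exact Nat.sInf_choose_ge_choose_two_mul (by omega)
  refine ⟨chains, fun M _ => ?_⟩
  obtain ⟨hP, hG⟩ := chains (M + 2) (by omega)
  exact ⟨Σ _ : Fin ((2 * (M + 2)).choose (M + 2)), Fin (M + 2), inferInstance, inferInstance,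
    by omega⟩
end

section
/- If P is a finite twin-free, rank-connected, planar lattice, then D(P) ≤ 2. -/
/-- Two incomparable points are twins if they relate in the same way to every point. -/
def AreTwins {P : Type*} [PartialOrder P] (x y : P) : Prop :=
  x ≠ y ∧ ¬ x ≤ y ∧ ¬ y ≤ x ∧ (∀ z : P, z < x ↔ z < y) ∧ (∀ z : P, x < z ↔ y < z)

/-!
Colour each element by whether it is leftmost (least first coordinate) on its rank level. Let `φ`
be a colour-preserving automorphism and `i` the lowest level it does not fix pointwise; let `x` be
the leftmost moved element of level `i`. Since `φ` preserves the colouring, `x` is not leftmost, so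
it has a nearest left neighbour `c` on level `i`, which is fixed. Rank-connectedness gives `c` and
`x` a common upper cover `u`; planarity forces `φ u = u` and makes `u` the only upper cover of `x`
and of `φ x`. As `φ` fixes everything below level `i`, `x` and `φ x` also have the same elements
below them, so they are twins.
-/

section Rank

variable {P : Type*} [PartialOrder P] {rk : P → ℕ} {a b : P}

theorem strictMono_of_rank_covBy [Finite P] (hrk : ∀ a b : P, a ⋖ b → rk b = rk a + 1) :
    StrictMono rk := by
  intro a b hab
  induction b using WellFoundedLT.induction with
  | _ b ih =>
    obtain ⟨w, haw, hwb⟩ := exists_le_covBy_of_lt hab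
    rw [hrk w b hwb]
    rcases haw.eq_or_lt with rfl | haw
    · exact Nat.lt_succ_self _
    · exact (ih w hwb.lt haw).trans (Nat.lt_succ_self _)

theorem eq_of_le_of_rank_eq (hrk : StrictMono rk) (hab : a ≤ b) (h : rk a = rk b) : a = b :=
  hab.eq_of_not_lt fun hlt => (hrk hlt).ne h

theorem covBy_of_le_of_rank_eq_succ (hrk : StrictMono rk) (hab : a ≤ b) (h : rk b = rk a + 1) :
    a ⋖ b :=
  ⟨hab.lt_of_ne (by rintro rfl; omega),
    fun _ hac hcb => by have := hrk hac; have := hrk hcb; omega⟩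

theorem lt_apply_iff_of_fixes_lower_rank (hrk : StrictMono rk) (φ : P ≃o P) {x z : P}
    (hφx : rk (φ x) = rk x) (hfix : ∀ z, rk z < rk x → φ z = z) : z < φ x ↔ z < x := by
  constructor
  · intro h
    rw [← hfix z (hφx ▸ hrk h)] at h
    exact φ.lt_iff_lt.mp h
  · intro h
    rw [← hfix z (hrk h)]
    exact φ.lt_iff_lt.mpr h

theorem lt_iff_le_of_forall_covBy_eq [Finite P] {x u z : P}
    (hxu : x ⋖ u) (huniq : ∀ y, x ⋖ y → y = u) : x < z ↔ u ≤ z := by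
  refine ⟨fun h => ?_, fun h => hxu.lt.trans_le h⟩
  obtain ⟨y, hxy, hyz⟩ := exists_covBy_le_of_lt h
  exact huniq y hxy ▸ hyz

end Rank

theorem OrderIso.apply_eq_self_of_isMin {P : Type*} [SemilatticeInf P] (φ : P ≃o P) {x : P}
    (hx : IsMin x) : φ x = x :=
  have bot_le : ∀ y, x ≤ y := fun _ => (hx.eq_of_ge inf_le_left).trans_le inf_le_right
  le_antisymm (φ.le_symm_apply.mp (bot_le _)) (bot_le _)

theorem rank_orderIso_apply {P : Type*} [SemilatticeInf P] [Finite P] {rk : P → ℕ}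
    (hrk : ∀ a b : P, a ⋖ b → rk b = rk a + 1) (φ : P ≃o P) (x : P) : rk (φ x) = rk x := by
  induction x using WellFoundedLT.induction with
  | _ x ih =>
    by_cases hx : IsMin x
    · rw [φ.apply_eq_self_of_isMin hx]
    · obtain ⟨y, hyx⟩ := not_isMin_iff.mp hx
      obtain ⟨w, -, hwx⟩ := exists_le_covBy_of_lt hyx
      rw [hrk _ _ ((apply_covBy_apply_iff φ).mpr hwx), hrk _ _ hwx, ih w hwx.lt]

section Planar

variable {P : Type*} [PartialOrder P] {rk f g : P → ℕ} {a b c u : P}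

theorem snd_le_of_fst_le_of_rank_eq (hrk : StrictMono rk)
    (hfg : ∀ x y : P, x ≤ y ↔ f x ≤ f y ∧ g x ≤ g y) (hr : rk a = rk b) (hf : f a ≤ f b) :
    g b ≤ g a := by
  by_contra! hg
  have hab : a = b := eq_of_le_of_rank_eq hrk ((hfg a b).mpr ⟨hf, hg.le⟩) hr
  exact hg.ne (congrArg g hab)

theorem eq_of_fst_eq_of_rank_eq (hrk : StrictMono rk)
    (hfg : ∀ x y : P, x ≤ y ↔ f x ≤ f y ∧ g x ≤ g y) (hr : rk a = rk b) (hf : f a = f b) :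
    a = b :=
  have hg : g a ≤ g b := snd_le_of_fst_le_of_rank_eq hrk hfg hr.symm hf.ge
  eq_of_le_of_rank_eq hrk ((hfg a b).mpr ⟨hf.le, hg⟩) hr

theorem le_of_fst_between (hrk : StrictMono rk)
    (hfg : ∀ x y : P, x ≤ y ↔ f x ≤ f y ∧ g x ≤ g y) (hr : rk a = rk b)
    (hab : f a ≤ f b) (hbc : f b ≤ f c) (hau : a ≤ u) (hcu : c ≤ u) : b ≤ u :=
  (hfg b u).mpr ⟨hbc.trans ((hfg c u).mp hcu).1,
    (snd_le_of_fst_le_of_rank_eq hrk hfg hr hab).trans ((hfg a u).mp hau).2⟩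

theorem le_and_le_of_crossing (hrk : StrictMono rk)
    (hfg : ∀ x y : P, x ≤ y ↔ f x ≤ f y ∧ g x ≤ g y) {a' b' : P}
    (ha : rk a = rk a') (hfa : f a ≤ f a') (hb : rk b = rk b') (hfb : f b ≤ f b')
    (hab' : a ≤ b') (ha'b : a' ≤ b) : a ≤ b ∧ a' ≤ b' := by
  have hga := snd_le_of_fst_le_of_rank_eq hrk hfg ha hfa
  have hgb := snd_le_of_fst_le_of_rank_eq hrk hfg hb hfb
  obtain ⟨hf₁, hg₁⟩ := (hfg a b').mp hab'
  obtain ⟨hf₂, hg₂⟩ := (hfg a' b).mp ha'b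
  exact ⟨(hfg a b).mpr ⟨by omega, by omega⟩, (hfg a' b').mpr ⟨by omega, by omega⟩⟩

end Planar

theorem eq_of_covBy_of_covBy_of_ne {P : Type*} [Lattice P] {a b u v : P} (hab : a ≠ b)
    (hau : a ⋖ u) (hbu : b ⋖ u) (hav : a ⋖ v) (hbv : b ⋖ v) : u = v :=
  (hau.wcovBy.sup_eq hbu.wcovBy hab).symm.trans (hav.wcovBy.sup_eq hbv.wcovBy hab)

section PlanarLattice

variable {P : Type*} [Lattice P] [Finite P] {rk f g : P → ℕ}

theorem eq_of_covBy_of_fan (hrk : ∀ a b : P, a ⋖ b → rk b = rk a + 1)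
    (hfg : ∀ x y : P, x ≤ y ↔ f x ≤ f y ∧ g x ≤ g y) {c x x' u y : P}
    (hc : rk c = rk x) (hx' : rk x = rk x') (hcx : f c < f x) (hxx' : f x < f x')
    (hcu : c ⋖ u) (hxu : x ⋖ u) (hx'u : x' ⋖ u) (hxy : x ⋖ y) : y = u := by
  have hmono := strictMono_of_rank_covBy hrk
  -- A second upper cover `y` of `x` would cross `c ⋖ u` or `x' ⋖ u`, and then cover `c` or `x'`
  -- too; but two points have at most one common upper cover, their join.
  have hyu : rk y = rk u := by rw [hrk _ _ hxy, hrk _ _ hxu]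
  have hne : ∀ {a b : P}, f a < f b → a ≠ b := fun h e => h.ne (congrArg f e)
  rcases lt_trichotomy (f y) (f u) with h | h | h
  · have hcy := (le_and_le_of_crossing hmono hfg hc hcx.le hyu h.le hcu.le hxy.le).1
    have hcy : c ⋖ y := covBy_of_le_of_rank_eq_succ hmono hcy (by rw [hyu, hrk _ _ hcu])
    exact eq_of_covBy_of_covBy_of_ne (hne hcx) hcy hxy hcu hxu
  · exact eq_of_fst_eq_of_rank_eq hmono hfg hyu h
  · have hx'y := (le_and_le_of_crossing hmono hfg hx' hxx'.le hyu.symm h.le hxy.le hx'u.le).2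
    have hx'y : x' ⋖ y := covBy_of_le_of_rank_eq_succ hmono hx'y (by rw [hyu, hrk _ _ hx'u])
    exact eq_of_covBy_of_covBy_of_ne (hne hxx') hxy hx'y hxu hx'u

theorem exists_covBy_covBy_of_preconnected (hrk : ∀ a b : P, a ⋖ b → rk b = rk a + 1)
    (hfg : ∀ x y : P, x ≤ y ↔ f x ≤ f y ∧ g x ≤ g y) {i : ℕ}
    (hconn : (SimpleGraph.fromRel fun a b : {z : P // rk z = i ∨ rk z = i + 1} =>
      (a : P) ⋖ (b : P)).Preconnected)
    {a b : P} (ha : rk a = i) (hb : rk b = i) (hab : f a < f b)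
    (hgap : ∀ z, rk z = i → f z ≤ f a ∨ f b ≤ f z) : ∃ u, a ⋖ u ∧ b ⋖ u := by
  have hmono := strictMono_of_rank_covBy hrk
  -- A walk from `a` to `b` leaves this up-set along a cover `q ⋖ p` with `q` right of `b` and
  -- `p` above a point left of `a`; by planarity `p` then lies above everything in between.
  let A : Set {z : P // rk z = i ∨ rk z = i + 1} :=
    {v | ∃ w, rk w = i ∧ f w ≤ f a ∧ w ≤ v}
  have hbA : ⟨b, .inl hb⟩ ∉ A := by
    rintro ⟨w, hw, hwa, hwb⟩
    rw [eq_of_le_of_rank_eq hmono hwb (hw.trans hb.symm)] at hwa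
    exact hwa.not_gt hab
  obtain ⟨d, -, ⟨w, hw, hwa, hwp⟩, hqA⟩ :=
    (hconn ⟨a, .inl ha⟩ ⟨b, .inl hb⟩).some.exists_boundary_dart A ⟨a, ha, le_rfl, le_rfl⟩ hbA
  obtain ⟨-, hpq | hqp⟩ := SimpleGraph.fromRel_adj _ _ _ |>.mp d.adj
  · exact absurd ⟨w, hw, hwa, hwp.trans hpq.le⟩ hqA
  have hq : rk d.snd = i ∧ rk d.fst = i + 1 := by
    have := hrk _ _ hqp
    rcases d.fst.2 with h | h <;> rcases d.snd.2 with h' | h' <;> omega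
  have hbq : f b ≤ f d.snd :=
    (hgap _ hq.1).resolve_left fun h => hqA ⟨d.snd, hq.1, h, le_rfl⟩
  refine ⟨d.fst, ?_, ?_⟩ <;> refine covBy_of_le_of_rank_eq_succ hmono ?_ (by omega)
  · exact le_of_fst_between hmono hfg (hw.trans ha.symm) hwa (hab.le.trans hbq) hwp hqp.le
  · exact le_of_fst_between hmono hfg (hw.trans hb.symm) (hwa.trans hab.le) hbq hwp hqp.le

theorem areTwins_apply_of_fixes_lower_rank (hrk : ∀ a b : P, a ⋖ b → rk b = rk a + 1)
    (hfg : ∀ x y : P, x ≤ y ↔ f x ≤ f y ∧ g x ≤ g y) (φ : P ≃o P) {c x u : P}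
    (hfix : ∀ z, rk z < rk x → φ z = z) (hφc : φ c = c) (hc : rk c = rk x)
    (hcx : f c < f x) (hxφx : f x < f (φ x)) (hcu : c ⋖ u) (hxu : x ⋖ u) :
    AreTwins x (φ x) := by
  have hmono := strictMono_of_rank_covBy hrk
  have hφx : rk x = rk (φ x) := (rank_orderIso_apply hrk φ x).symm
  have hφu : φ u = u := by
    have hcφu : c ⋖ φ u := hφc ▸ (apply_covBy_apply_iff φ).mpr hcu
    have hφxφu : φ x ⋖ φ u := (apply_covBy_apply_iff φ).mpr hxu
    have hxφu : x ⋖ φ u := covBy_of_le_of_rank_eq_succ hmono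
      (le_of_fst_between hmono hfg hc hcx.le hxφx.le hcφu.le hφxφu.le)
      (by rw [hrk _ _ hφxφu, hφx])
    exact eq_of_covBy_of_covBy_of_ne (fun e => hcx.ne (congrArg f e)) hcφu hxφu hcu hxu
  have hφxu : φ x ⋖ u := hφu ▸ (apply_covBy_apply_iff φ).mpr hxu
  have hup : ∀ z, x < z ↔ u ≤ z := fun z => lt_iff_le_of_forall_covBy_eq hxu
    fun y hxy => eq_of_covBy_of_fan hrk hfg hc hφx hcx hxφx hcu hxu hφxu hxy
  have hne : x ≠ φ x := fun e => hxφx.ne (congrArg f e)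
  refine ⟨hne, fun h => hne (eq_of_le_of_rank_eq hmono h hφx),
    fun h => hne (eq_of_le_of_rank_eq hmono h hφx.symm).symm,
    fun z => (lt_apply_iff_of_fixes_lower_rank hmono φ hφx.symm hfix).symm, fun z => ?_⟩
  rw [← φ.lt_symm_apply, hup, hup, φ.le_symm_apply, hφu]

end PlanarLattice

def IsLeftmost {P : Type*} (rk f : P → ℕ) (x : P) : Prop :=
  ∀ y, rk y = rk x → f x ≤ f y

theorem apply_eq_self_of_fixes_lower_rank {P : Type*} [Lattice P] [Finite P] {rk f g : P → ℕ}
    (hrk : ∀ a b : P, a ⋖ b → rk b = rk a + 1)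
    (hfg : ∀ x y : P, x ≤ y ↔ f x ≤ f y ∧ g x ≤ g y) (htwin : ∀ x y : P, ¬ AreTwins x y)
    {i : ℕ} (hconn : (SimpleGraph.fromRel fun a b : {z : P // rk z = i ∨ rk z = i + 1} =>
      (a : P) ⋖ (b : P)).Preconnected)
    (φ : P ≃o P) (hleft : ∀ x, IsLeftmost rk f x → IsLeftmost rk f (φ x))
    (hfix : ∀ z, rk z < i → φ z = z) {x₀ : P} (hx₀ : rk x₀ = i) : φ x₀ = x₀ := by
  have hmono := strictMono_of_rank_covBy hrk
  by_contra hφx₀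
  obtain ⟨x, ⟨hx, hφx⟩, hxmin⟩ :=
    Set.exists_min_image {x | rk x = i ∧ φ x ≠ x} f (Set.toFinite _) ⟨x₀, hx₀, hφx₀⟩
  have hrφx : rk (φ x) = rk x := rank_orderIso_apply hrk φ x
  have hxφx : f x < f (φ x) :=
    (hxmin (φ x) ⟨hrφx.trans hx, fun h => hφx (φ.injective h)⟩).lt_of_ne
      fun h => hφx (eq_of_fst_eq_of_rank_eq hmono hfg hrφx h.symm)
  obtain ⟨y, hy, hyx⟩ : ∃ y, rk y = rk x ∧ f y < f x := by
    by_contra! h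
    exact (hleft x h x hrφx.symm).not_gt hxφx
  obtain ⟨c, ⟨hc, hcx⟩, hcmax⟩ :=
    Set.exists_max_image {z | rk z = i ∧ f z < f x} f (Set.toFinite _) ⟨y, hy.trans hx, hyx⟩
  have hφc : φ c = c := by
    by_contra h
    exact (hxmin c ⟨hc, h⟩).not_gt hcx
  obtain ⟨u, hcu, hxu⟩ := exists_covBy_covBy_of_preconnected hrk hfg hconn hc hx hcx
    fun z hz => (lt_or_ge (f z) (f x)).imp (fun h => hcmax z ⟨hz, h⟩) id
  exact htwin x (φ x) (areTwins_apply_of_fixes_lower_rank hrk hfg φ (hx ▸ hfix) hφc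
    (hc.trans hx.symm) hcx hxφx hcu hxu)

/-- Planarity is encoded as order dimension at most 2, which for finite lattices is equivalent to
upward planarity of the Hasse diagram. -/
theorem distNum_le_two_of_planar_rank_connected_general {P : Type*} [Lattice P] [Fintype P]
    (rk : P → ℕ) (hrkcov : ∀ a b : P, a ⋖ b → rk b = rk a + 1)
    (hconn : ∀ i : ℕ,
      (SimpleGraph.fromRel fun a b : {z : P // rk z = i ∨ rk z = i + 1} =>
        (a : P) ⋖ (b : P)).Preconnected)
    (hplanar : ∃ f g : P → ℕ, ∀ x y : P, x ≤ y ↔ (f x ≤ f y ∧ g x ≤ g y))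
    (htwinfree : ∀ x y : P, ¬ AreTwins x y) :
    distNum P ≤ 2 := by
  classical
  obtain ⟨f, g, hfg⟩ := hplanar
  refine Nat.sInf_le ⟨fun x => if IsLeftmost rk f x then 0 else 1, fun φ hφ => ?_⟩
  have hleft : ∀ x, IsLeftmost rk f x → IsLeftmost rk f (φ x) := by
    intro x hx
    by_contra h
    simpa [hx, h] using hφ x
  suffices ∀ i x, rk x = i → φ x = x from fun x => this _ x rfl
  intro i
  induction i using Nat.strong_induction_on with
  | _ i ih =>
    exact fun x hx => apply_eq_self_of_fixes_lower_rank hrkcov hfg htwinfree (hconn i) φ hleft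
      (fun z hz => ih _ hz z rfl) hx

/-- Every finite twin-free, rank-connected, planar lattice has
distinguishing number at most 2.  Here `rk` is a rank function (the lattice is ranked),
rank-connectedness says the cover graph between any two consecutive ranks is connected,
and planarity is expressed (for finite lattices, equivalently to upward planarity of the
Hasse diagram) by order dimension at most 2: the order is the intersection of two linear
orders, i.e. it embeds coordinatewise into `ℕ × ℕ`. -/
theorem distNum_le_two_of_planar_rank_connected {P : Type*} [Lattice P] [Fintype P]
    [BoundedOrder P]
    (rk : P → ℕ) (hrk0 : rk ⊥ = 0) (hrkcov : ∀ a b : P, a ⋖ b → rk b = rk a + 1)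
    (hconn : ∀ i : ℕ,
      (SimpleGraph.fromRel fun a b : {z : P // rk z = i ∨ rk z = i + 1} =>
        (a : P) ⋖ (b : P)).Preconnected)
    (hplanar : ∃ f g : P → ℕ, ∀ x y : P, x ≤ y ↔ (f x ≤ f y ∧ g x ≤ g y))
    (htwinfree : ∀ x y : P, ¬ AreTwins x y) :
    distNum P ≤ 2 :=
  distNum_le_two_of_planar_rank_connected_general rk hrkcov hconn hplanar htwinfree
end
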